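/- arXiv:math/0206148 — 8 statements merged into one kernel-verified Lean document; each statement's English description precedes it below -/
import Mathlib

section
/- Fix n ∈ ℕ and an integer Q ≥ 1. For functions s, t : [n] → {1,…,Q} and a ∈ p_n, say that (s,t) respects a if the colouring of [n] ⊔ [n]′ assigning s(i) to i and t(i) to i′ is constant on every part of a. Let R(a) be the integer matrix with rows and columns indexed by functions [n] → {1,…,Q}, whose (s,t)-entry is 1 if (s,t) respects a and 0 otherwise. Then for all a, b ∈ p_n one has the matrix identity R(a) · R(b) = Q^{c(a,b)} · R(a∘b). -/
attribute [local instance] Classical.propDecidable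

namespace RamifiedPartition

/-- The two-row set `[n] ⊔ [n]′`. -/
abbrev Row2 (n : ℕ) := Sum (Fin n) (Fin n)

/-- `p_n`: partitions (equivalence relations) of `[n] ⊔ [n]′`,
with `a ≤ b` meaning that `a` refines `b`. -/
abbrev PN (n : ℕ) := Setoid (Row2 n)

/-- The three-row set `[n] ⊔ [n]′ ⊔ [n]″`. -/
abbrev Row3 (n : ℕ) := Sum (Fin n) (Sum (Fin n) (Fin n))

variable {n : ℕ}

/-- Embedding of the two-row set as rows 1,2 of the three-row set. -/
def emb12 : Row2 n → Row3 n := Sum.elim Sum.inl (fun i => Sum.inr (Sum.inl i))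

/-- Embedding of the two-row set as rows 2,3 of the three-row set. -/
def emb23 : Row2 n → Row3 n :=
  Sum.elim (fun i => Sum.inr (Sum.inl i)) (fun i => Sum.inr (Sum.inr i))

/-- Embedding of the two-row set as rows 1,3 of the three-row set. -/
def emb13 : Row2 n → Row3 n := Sum.elim Sum.inl (fun i => Sum.inr (Sum.inr i))

/-- `D_u(a,b)`: the equivalence relation on the three-row set generated by `a`
placed on rows 1,2 and `b` placed on rows 2,3. -/
def Du (a b : PN n) : Setoid (Row3 n) :=
  Relation.EqvGen.setoid (fun x y =>
    (∃ u v : Row2 n, a.r u v ∧ x = emb12 u ∧ y = emb12 v) ∨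
    (∃ u v : Row2 n, b.r u v ∧ x = emb23 u ∧ y = emb23 v))

/-- The composite `a ∘ b`: the restriction of `D_u(a,b)` to rows 1,3
(relabelled as `[n] ⊔ [n]′`). -/
def comp (a b : PN n) : PN n := Setoid.comap emb13 (Du a b)

/-- `c(a,b)`: the number of classes of `D_u(a,b)` contained entirely in the
middle row `[n]′`. -/
noncomputable def cnum (a b : PN n) : ℕ :=
  Nat.card {C : Quotient (Du a b) //
    ∀ x : Row3 n, Quotient.mk (Du a b) x = C → ∃ i : Fin n, x = Sum.inr (Sum.inl i)}

/-- The identity partition of `[n] ⊔ [n]′`, with parts `{i, i′}` for `i = 1,…,n`. -/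
def oneP (n : ℕ) : PN n := Setoid.ker (Sum.elim id id)

end RamifiedPartition

namespace RamifiedPartition

/-- The Potts representation matrix `R(a)`: rows and columns are indexed by
colourings `[n] → {1,…,Q}`; the `(s,t)` entry is `1` if the colouring
`Sum.elim s t` of `[n] ⊔ [n]′` is constant on every part of `a`
(i.e. `(s,t)` respects `a`), and `0` otherwise. -/
noncomputable def pottsR (n Q : ℕ) (a : PN n) :
    Matrix (Fin n → Fin Q) (Fin n → Fin Q) ℤ := fun s t =>
  if a ≤ Setoid.ker (Sum.elim s t) then 1 else 0


section Aux
variable {n Q : ℕ}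

def FF (s t u : Fin n → Fin Q) : Row3 n → Fin Q := Sum.elim s (Sum.elim u t)

lemma FF_emb12 (s t u : Fin n → Fin Q) (x : Row2 n) :
    FF s t u (emb12 x) = Sum.elim s u x := by cases x <;> rfl
lemma FF_emb23 (s t u : Fin n → Fin Q) (x : Row2 n) :
    FF s t u (emb23 x) = Sum.elim u t x := by cases x <;> rfl
lemma FF_emb13 (s t u : Fin n → Fin Q) (x : Row2 n) :
    FF s t u (emb13 x) = Sum.elim s t x := by cases x <;> rfl

lemma good_iff (a b : PN n) (s t u : Fin n → Fin Q) :
    Du a b ≤ Setoid.ker (FF s t u) ↔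
      (a ≤ Setoid.ker (Sum.elim s u) ∧ b ≤ Setoid.ker (Sum.elim u t)) := by
  constructor
  · intro h
    constructor
    · intro x y hxy
      have : (Du a b) (emb12 x) (emb12 y) :=
        Relation.EqvGen.rel _ _ (Or.inl ⟨x, y, hxy, rfl, rfl⟩)
      have := h this
      rw [Setoid.ker_def] at this ⊢
      rwa [FF_emb12, FF_emb12] at this
    · intro x y hxy
      have : (Du a b) (emb23 x) (emb23 y) :=
        Relation.EqvGen.rel _ _ (Or.inr ⟨x, y, hxy, rfl, rfl⟩)
      have := h this
      rw [Setoid.ker_def] at this ⊢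
      rwa [FF_emb23, FF_emb23] at this
  · rintro ⟨h1, h2⟩ x y hxy
    rw [Setoid.ker_def]
    induction hxy with
    | rel x y hr =>
      rcases hr with ⟨p, q, hpq, rfl, rfl⟩ | ⟨p, q, hpq, rfl, rfl⟩
      · rw [FF_emb12, FF_emb12]; exact h1 hpq
      · rw [FF_emb23, FF_emb23]; exact h2 hpq
    | refl x => rfl
    | symm x y _ ih => exact ih.symm
    | trans x y z _ _ ih1 ih2 => exact ih1.trans ih2

def MidP (a b : PN n) (C : Quotient (Du a b)) : Prop :=
  ∀ x : Row3 n, Quotient.mk (Du a b) x = C → ∃ i : Fin n, x = Sum.inr (Sum.inl i)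

lemma cnum_eq (a b : PN n) : cnum a b = Nat.card {C // MidP a b C} := rfl

def GG (hQ : 1 ≤ Q) (s t : Fin n → Fin Q) : Row3 n → Fin Q :=
  Sum.elim s (Sum.elim (fun _ => ⟨0, hQ⟩) t)

lemma exists_nonmid (a b : PN n) {C : Quotient (Du a b)} (h : ¬ MidP a b C) :
    ∃ x : Row3 n, Quotient.mk (Du a b) x = C ∧ ¬∃ i : Fin n, x = Sum.inr (Sum.inl i) := by
  unfold MidP at h
  push_neg at h
  obtain ⟨x, hx, hx2⟩ := h
  exact ⟨x, hx, by push_neg; exact fun i => hx2 i⟩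

lemma GG_well (a b : PN n) (hQ : 1 ≤ Q) {s t : Fin n → Fin Q}
    (hst : comp a b ≤ Setoid.ker (Sum.elim s t)) {x y : Row3 n}
    (hxy : (Du a b) x y)
    (hx : ¬∃ i : Fin n, x = Sum.inr (Sum.inl i))
    (hy : ¬∃ i : Fin n, y = Sum.inr (Sum.inl i)) :
    GG hQ s t x = GG hQ s t y := by
  have key : ∀ p q : Row2 n, (Du a b) (emb13 p) (emb13 q) →
      Sum.elim s t p = Sum.elim s t q := by
    intro p q h
    exact Setoid.ker_def.mp (hst (show (comp a b) p q from h))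
  rcases x with i | x' <;> rcases y with j | y'
  · exact key (Sum.inl i) (Sum.inl j) hxy
  · rcases y' with j | j
    · exact absurd ⟨j, rfl⟩ hy
    · exact key (Sum.inl i) (Sum.inr j) hxy
  · rcases x' with i | i
    · exact absurd ⟨i, rfl⟩ hx
    · exact key (Sum.inr i) (Sum.inl j) hxy
  · rcases x' with i | i
    · exact absurd ⟨i, rfl⟩ hx
    · rcases y' with j | j
      · exact absurd ⟨j, rfl⟩ hy
      · exact key (Sum.inr i) (Sum.inr j) hxy

noncomputable def classVal (a b : PN n) (hQ : 1 ≤ Q) (s t : Fin n → Fin Q)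
    (g : {C // MidP a b C} → Fin Q) (C : Quotient (Du a b)) : Fin Q :=
  if h : MidP a b C then g ⟨C, h⟩
  else GG hQ s t (Classical.choose (exists_nonmid a b h))

noncomputable def backU (a b : PN n) (hQ : 1 ≤ Q) (s t : Fin n → Fin Q)
    (g : {C // MidP a b C} → Fin Q) : Fin n → Fin Q :=
  fun i => classVal a b hQ s t g (Quotient.mk (Du a b) (Sum.inr (Sum.inl i)))

lemma GG_eq_FF (hQ : 1 ≤ Q) (s t u : Fin n → Fin Q) {x : Row3 n}
    (hx : ¬∃ i : Fin n, x = Sum.inr (Sum.inl i)) : GG hQ s t x = FF s t u x := by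
  rcases x with i | x'
  · rfl
  · rcases x' with i | i
    · exact absurd ⟨i, rfl⟩ hx
    · rfl

lemma FF_backU (a b : PN n) (hQ : 1 ≤ Q) {s t : Fin n → Fin Q}
    (hst : comp a b ≤ Setoid.ker (Sum.elim s t)) (g : {C // MidP a b C} → Fin Q)
    (x : Row3 n) :
    FF s t (backU a b hQ s t g) x = classVal a b hQ s t g (Quotient.mk (Du a b) x) := by
  have nonmid : ∀ x : Row3 n, (¬∃ i : Fin n, x = Sum.inr (Sum.inl i)) →
      FF s t (backU a b hQ s t g) x = classVal a b hQ s t g (Quotient.mk (Du a b) x) := by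
    intro x hx
    have hnm : ¬ MidP a b (Quotient.mk (Du a b) x) := fun h => hx (h x rfl)
    rw [classVal, dif_neg hnm]
    obtain ⟨hy1, hy2⟩ := Classical.choose_spec (exists_nonmid a b hnm)
    set y := Classical.choose (exists_nonmid a b hnm)
    have hrel : (Du a b) y x := Quotient.exact hy1
    rw [GG_well a b hQ hst hrel hy2 hx, GG_eq_FF hQ s t (backU a b hQ s t g) hx]
  rcases x with i | x'
  · exact nonmid _ (by rintro ⟨j, h⟩; cases h)
  · rcases x' with i | i
    · rfl
    · exact nonmid _ (by rintro ⟨j, h⟩; cases h)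

lemma backU_good (a b : PN n) (hQ : 1 ≤ Q) {s t : Fin n → Fin Q}
    (hst : comp a b ≤ Setoid.ker (Sum.elim s t)) (g : {C // MidP a b C} → Fin Q) :
    Du a b ≤ Setoid.ker (FF s t (backU a b hQ s t g)) := by
  intro x y hxy
  rw [Setoid.ker_def, FF_backU a b hQ hst, FF_backU a b hQ hst, Quotient.sound hxy]

noncomputable def fwd (a b : PN n) (s t u : Fin n → Fin Q)
    (C : {C // MidP a b C}) : Fin Q :=
  u (Classical.choose (C.2 C.1.out (Quotient.out_eq _)))

lemma fwd_spec (a b : PN n) (s t u : Fin n → Fin Q)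
    (hu : Du a b ≤ Setoid.ker (FF s t u)) (C : {C // MidP a b C}) {i : Fin n}
    (hi : Quotient.mk (Du a b) (Sum.inr (Sum.inl i)) = C.1) :
    fwd a b s t u C = u i := by
  have hspec := Classical.choose_spec (C.2 C.1.out (Quotient.out_eq _))
  set j := Classical.choose (C.2 C.1.out (Quotient.out_eq _))
  have hj : Quotient.mk (Du a b) (Sum.inr (Sum.inl j)) = C.1 := by
    rw [← hspec]; exact Quotient.out_eq _
  have : (Du a b) (Sum.inr (Sum.inl j)) (Sum.inr (Sum.inl i)) :=
    Quotient.exact (hj.trans hi.symm)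
  have := Setoid.ker_def.mp (hu this)
  exact this

lemma card_good (a b : PN n) (hQ : 1 ≤ Q) {s t : Fin n → Fin Q}
    (hst : comp a b ≤ Setoid.ker (Sum.elim s t)) :
    Nat.card {u : Fin n → Fin Q // Du a b ≤ Setoid.ker (FF s t u)} = Q ^ cnum a b := by
  have e : {u : Fin n → Fin Q // Du a b ≤ Setoid.ker (FF s t u)} ≃
      ({C // MidP a b C} → Fin Q) := by
    refine ⟨fun u => fwd a b s t u.1, fun g => ⟨backU a b hQ s t g, backU_good a b hQ hst g⟩,
      ?_, ?_⟩
    · rintro ⟨u, hu⟩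
      apply Subtype.ext
      funext i
      show classVal a b hQ s t (fwd a b s t u) (Quotient.mk (Du a b) (Sum.inr (Sum.inl i))) = u i
      by_cases h : MidP a b (Quotient.mk (Du a b) (Sum.inr (Sum.inl i)))
      · rw [classVal, dif_pos h]
        exact fwd_spec a b s t u hu ⟨_, h⟩ rfl
      · rw [classVal, dif_neg h]
        obtain ⟨hy1, hy2⟩ := Classical.choose_spec (exists_nonmid a b h)
        set y := Classical.choose (exists_nonmid a b h)
        have hrel : (Du a b) y (Sum.inr (Sum.inl i)) := Quotient.exact hy1
        rw [GG_eq_FF hQ s t u hy2]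
        exact Setoid.ker_def.mp (hu hrel)
    · intro g
      funext C
      obtain ⟨i, hi⟩ := C.2 C.1.out (Quotient.out_eq _)
      have hmk : Quotient.mk (Du a b) (Sum.inr (Sum.inl i)) = C.1 := by
        rw [← hi]; exact Quotient.out_eq _
      show fwd a b s t (backU a b hQ s t g) C = g C
      rw [fwd_spec a b s t (backU a b hQ s t g) (backU_good a b hQ hst g) C hmk]
      show classVal a b hQ s t g (Quotient.mk (Du a b) (Sum.inr (Sum.inl i))) = g C
      rw [hmk, classVal, dif_pos C.2]
  rw [Nat.card_congr e, Nat.card_fun, Nat.card_eq_fintype_card, Fintype.card_fin, cnum_eq]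

lemma no_good (a b : PN n) {s t u : Fin n → Fin Q}
    (hu : Du a b ≤ Setoid.ker (FF s t u)) :
    comp a b ≤ Setoid.ker (Sum.elim s t) := by
  intro x y hxy
  have := Setoid.ker_def.mp (hu (show (Du a b) (emb13 x) (emb13 y) from hxy))
  rw [FF_emb13, FF_emb13] at this
  exact Setoid.ker_def.mpr this

end Aux

/-- for all `a, b ∈ p_n`, `R(a) · R(b) = Q^{c(a,b)} · R(a∘b)`. -/
theorem pottsR_mul (n Q : ℕ) (hQ : 1 ≤ Q) (a b : PN n) :
    pottsR n Q a * pottsR n Q b = (Q : ℤ) ^ cnum a b • pottsR n Q (comp a b) := by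
  ext s t
  rw [Matrix.mul_apply, Matrix.smul_apply, smul_eq_mul]
  have step1 : ∀ u : Fin n → Fin Q,
      pottsR n Q a s u * pottsR n Q b u t
        = if Du a b ≤ Setoid.ker (FF s t u) then (1 : ℤ) else 0 := by
    intro u
    by_cases h : Du a b ≤ Setoid.ker (FF s t u)
    · obtain ⟨h1, h2⟩ := (good_iff a b s t u).mp h
      simp [pottsR, h1, h2, h]
    · rw [if_neg h]
      rw [good_iff] at h
      simp only [pottsR]
      rcases not_and_or.mp h with h1 | h1 <;> simp [h1]
  rw [Finset.sum_congr rfl (fun u _ => step1 u), Finset.sum_boole]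
  have hcard : (Finset.univ.filter fun u : Fin n → Fin Q =>
      Du a b ≤ Setoid.ker (FF s t u)).card
      = Nat.card {u : Fin n → Fin Q // Du a b ≤ Setoid.ker (FF s t u)} := by
    rw [Nat.card_eq_fintype_card, Fintype.card_subtype]
  by_cases hst : comp a b ≤ Setoid.ker (Sum.elim s t)
  · simp only [pottsR, if_pos hst, mul_one]
    rw [hcard, card_good a b hQ hst]
    push_cast
    ring
  · simp only [pottsR, if_neg hst, mul_zero]
    have hempty : (Finset.univ.filter fun u : Fin n → Fin Q =>
        Du a b ≤ Setoid.ker (FF s t u)) = ∅ := by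
      rw [Finset.filter_eq_empty_iff]
      intro u _ hu
      exact hst (no_good a b hu)
    rw [hempty]
    simp

end RamifiedPartition
end

section
/- For n ≥ 2, the submonoid of the monoid (p_n^{(2)}, ∘) generated by the set G_n = {(A^1,1), (A^1,A^1), (1,A^{12}), (A^{12},A^{12})} ∪ {(σ_i,σ_i) : 1 ≤ i ≤ n−1} is all of p_n^{(2)}; that is, every 2-ramified partition of [n] ⊔ [n]′ is a finite ∘-product of elements of G_n. -/
/-!
Right multiplication by a generator only changes the bottom row: `(σᵢ, σᵢ)` relabels it,
`(A¹, 1)` and `(A¹, A¹)` detach `1′` from its class in the first, resp. both, components, and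
`(1, A¹²)`, `(A¹², A¹²)` glue the classes of `1′` and `2′` in the second, resp. both, components.
Since the `σᵢ` generate all relabellings, conjugating moves these operations to any bottom points.

A pair `a₁ ≤ a₂` is taken apart by detaching bottom points, which gluing undoes: in both components
when the point shares its `a₁`-class with another bottom point, in `a₂` only when it is a singleton
of `a₁` but not alone among the bottom points of its `a₂`-class. What remains has every bottom point
either attached to the top row or alone, and it arises from the mirror image of its top restriction
(the top classes copied onto the bottom row, built from `(1, 1)` by gluing) by relabelling the bottom
row and detaching the unattached bottom points.
-/

attribute [local instance] Classical.propDecidable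

namespace RamifiedPartition

variable {n : ℕ}

/-- `A^i ∈ p_n`: obtained from the identity partition by replacing the part
`{i,i′}` by the two singleton parts `{i}, {i′}`. -/
def Ai (i : Fin n) : PN n :=
  Setoid.ker (Sum.elim (fun j => (j, false)) (fun j => (j, decide (j = i))))

/-- `A^{ij} ∈ p_n`: obtained from the identity partition by replacing the parts
`{i,i′}, {j,j′}` by the single part `{i,i′,j,j′}`. -/
def Aij (i j : Fin n) : PN n :=
  Setoid.ker (Sum.elim (fun l => if l = j then i else l) (fun l => if l = j then i else l))

/-- `σ` for a transposition `(i j)`: the partition with parts `{i,j′}`, `{j,i′}`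
and `{l,l′}` for `l ∉ {i,j}`. -/
def sigP (i j : Fin n) : PN n :=
  Setoid.ker (Sum.elim id (Equiv.swap i j))

/-- componentwise composite on `p_n × p_n` -/
def rcomp (a b : PN n × PN n) : PN n × PN n := (comp a.1 b.1, comp a.2 b.2)

/-- The generating set
`G_n = {(A¹,1), (A¹,A¹), (1,A¹²), (A¹²,A¹²)} ∪ {(σ_i,σ_i) : 1 ≤ i ≤ n−1}`. -/
def Gset (n : ℕ) (hn : 2 ≤ n) : Set (PN n × PN n) :=
  {(Ai ⟨0, by omega⟩, oneP n),
   (Ai ⟨0, by omega⟩, Ai ⟨0, by omega⟩),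
   (oneP n, Aij ⟨0, by omega⟩ ⟨1, by omega⟩),
   (Aij ⟨0, by omega⟩ ⟨1, by omega⟩, Aij ⟨0, by omega⟩ ⟨1, by omega⟩)} ∪
  {p | ∃ (i : ℕ) (h : i + 1 < n),
    p = (sigP ⟨i, by omega⟩ ⟨i + 1, h⟩, sigP ⟨i, by omega⟩ ⟨i + 1, h⟩)}

end RamifiedPartition

namespace Setoid

variable {α β : Type*}

instance [Finite α] : Finite (Setoid α) :=
  Finite.of_injective (fun s : Setoid α => ⇑s) fun _ _ h =>
    Setoid.ext fun x y => iff_of_eq (congrFun (congrFun h x) y)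

def isolate (S : Set α) (s : Setoid α) : Setoid α where
  r x y := x = y ∨ (x ∉ S ∧ y ∉ S ∧ s x y)
  iseqv := by
    refine ⟨fun x => Or.inl rfl, ?_, ?_⟩
    · rintro x y (rfl | ⟨hx, hy, h⟩)
      exacts [Or.inl rfl, Or.inr ⟨hy, hx, s.symm h⟩]
    · rintro x y z (rfl | ⟨hx, hy, h⟩) (rfl | ⟨hy', hz, h'⟩)
      exacts [Or.inl rfl, Or.inr ⟨hy', hz, h'⟩, Or.inr ⟨hx, hy, h⟩, Or.inr ⟨hx, hz, s.trans h h'⟩]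

def glue (c d : α) (s : Setoid α) : Setoid α where
  r x y := s x y ∨ (s x c ∧ s d y) ∨ (s x d ∧ s c y)
  iseqv := by
    refine ⟨fun x => Or.inl (s.refl x), ?_, ?_⟩
    · rintro x y (h | ⟨h, h'⟩ | ⟨h, h'⟩)
      exacts [Or.inl (s.symm h), Or.inr (Or.inr ⟨s.symm h', s.symm h⟩),
        Or.inr (Or.inl ⟨s.symm h', s.symm h⟩)]
    · rintro x y z (h | ⟨h₁, h₂⟩ | ⟨h₁, h₂⟩) (h' | ⟨h₁', h₂'⟩ | ⟨h₁', h₂'⟩)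
      · exact Or.inl (s.trans h h')
      · exact Or.inr (Or.inl ⟨s.trans h h₁', h₂'⟩)
      · exact Or.inr (Or.inr ⟨s.trans h h₁', h₂'⟩)
      · exact Or.inr (Or.inl ⟨h₁, s.trans h₂ h'⟩)
      · exact Or.inl (s.trans h₁ (s.trans (s.symm (s.trans h₂ h₁')) h₂'))
      · exact Or.inl (s.trans h₁ h₂')
      · exact Or.inr (Or.inr ⟨h₁, s.trans h₂ h'⟩)
      · exact Or.inl (s.trans h₁ h₂')
      · exact Or.inl (s.trans h₁ (s.trans (s.symm (s.trans h₂ h₁')) h₂'))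

@[simp]
theorem isolate_rel {S : Set α} {s : Setoid α} {x y : α} :
    isolate S s x y ↔ x = y ∨ (x ∉ S ∧ y ∉ S ∧ s x y) := Iff.rfl

@[simp]
theorem glue_rel {c d : α} {s : Setoid α} {x y : α} :
    glue c d s x y ↔ s x y ∨ (s x c ∧ s d y) ∨ (s x d ∧ s c y) := Iff.rfl

theorem isolate_le (S : Set α) (s : Setoid α) : isolate S s ≤ s := by
  rintro x y (rfl | ⟨-, -, h⟩)
  exacts [s.refl x, h]

theorem isolate_mono (S : Set α) {s t : Setoid α} (h : s ≤ t) : isolate S s ≤ isolate S t := by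
  rintro x y (rfl | ⟨hx, hy, hxy⟩)
  exacts [Or.inl rfl, Or.inr ⟨hx, hy, h hxy⟩]

theorem isolate_lt {s : Setoid α} {c d : α} (h : s c d) (hcd : c ≠ d) : isolate {c} s < s := by
  refine lt_of_le_of_ne (isolate_le _ _) fun heq => ?_
  rcases (by rwa [heq] : isolate {c} s c d) with h' | ⟨hc, -⟩
  exacts [hcd h', hc rfl]

theorem le_isolate {s t : Setoid α} {c : α} (h : s ≤ t) (hc : ∀ z, s c z → z = c) :
    s ≤ isolate {c} t := by
  intro x y hxy
  by_cases hx : x = c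
  · subst hx; exact Or.inl (hc y hxy).symm
  by_cases hy : y = c
  · subst hy; exact Or.inl (hc x (s.symm hxy))
  exact Or.inr ⟨hx, hy, h hxy⟩

theorem isolate_empty (s : Setoid α) : isolate ∅ s = s :=
  le_antisymm (isolate_le _ _) fun _ _ h => Or.inr ⟨id, id, h⟩

theorem isolate_insert (c : α) (S : Set α) (s : Setoid α) :
    isolate (insert c S) s = isolate {c} (isolate S s) := by
  refine Setoid.ext fun x y => ?_
  simp only [isolate_rel, Set.mem_insert_iff, Set.mem_singleton_iff, not_or]
  constructor
  · rintro (rfl | ⟨⟨hxc, hxS⟩, ⟨hyc, hyS⟩, h⟩)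
    exacts [Or.inl rfl, Or.inr ⟨hxc, hyc, Or.inr ⟨hxS, hyS, h⟩⟩]
  · rintro (rfl | ⟨hxc, hyc, rfl | ⟨hxS, hyS, h⟩⟩)
    exacts [Or.inl rfl, Or.inl rfl, Or.inr ⟨⟨hxc, hxS⟩, ⟨hyc, hyS⟩, h⟩]

theorem comap_isolate {f : β → α} (hf : f.Injective) (S : Set α) (s : Setoid α) :
    (isolate S s).comap f = isolate (f ⁻¹' S) (s.comap f) := by
  refine Setoid.ext fun x y => ?_
  simp only [comap_rel, isolate_rel, Set.mem_preimage, hf.eq_iff]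

theorem le_glue (c d : α) (s : Setoid α) : s ≤ glue c d s := fun _ _ h => Or.inl h

theorem glue_le {c d : α} {s t : Setoid α} (h : s ≤ t) (hcd : t c d) : glue c d s ≤ t := by
  rintro x y (hxy | ⟨h₁, h₂⟩ | ⟨h₁, h₂⟩)
  · exact h hxy
  · exact t.trans (h h₁) (t.trans hcd (h h₂))
  · exact t.trans (h h₁) (t.trans (t.symm hcd) (h h₂))

theorem glue_isolate {s : Setoid α} {c d : α} (h : s c d) (hcd : c ≠ d) :
    glue c d (isolate {c} s) = s := by
  refine le_antisymm (glue_le (isolate_le _ _) h) fun x y hxy => ?_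
  have hdc : d ∉ ({c} : Set α) := Ne.symm hcd
  by_cases hx : x = c <;> by_cases hy : y = c
  · exact Or.inl (Or.inl (hx.trans hy.symm))
  · exact Or.inr (Or.inl ⟨Or.inl hx, Or.inr ⟨hdc, hy, s.trans (s.symm h) (hx ▸ hxy)⟩⟩)
  · exact Or.inr (Or.inr ⟨Or.inr ⟨hx, hdc, s.trans (hy ▸ hxy) h⟩, Or.inl hy.symm⟩)
  · exact Or.inl (Or.inr ⟨hx, hy, hxy⟩)

theorem comap_glue (f : β → α) (c d : β) (s : Setoid α) :
    (glue (f c) (f d) s).comap f = glue c d (s.comap f) := rfl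

theorem le_induction_on_glue [Finite α] (X : Set α) {P : Setoid α → Setoid α → Prop}
    (base : ∀ s t, s ≤ t → (∀ c ∈ X, ∀ d ∈ X, c ≠ d → ¬ s c d) →
      (∀ c ∈ X, ∀ d ∈ X, c ≠ d → t c d → ∃ z, s c z ∧ z ≠ c) → P s t)
    (glue_both : ∀ s t, ∀ c ∈ X, ∀ d ∈ X, c ≠ d → P s t → P (glue c d s) (glue c d t))
    (glue_right : ∀ s t, ∀ c ∈ X, ∀ d ∈ X, c ≠ d → P s t → P s (glue c d t))
    {s t : Setoid α} (hst : s ≤ t) : P s t := by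
  suffices ∀ p : Setoid α × Setoid α, p.1 ≤ p.2 → P p.1 p.2 from this (s, t) hst
  intro p
  induction p using WellFoundedLT.induction with | _ p ih => ?_
  obtain ⟨s, t⟩ := p
  intro hst
  by_cases hs : ∃ c ∈ X, ∃ d ∈ X, c ≠ d ∧ s c d
  · obtain ⟨c, hc, d, hd, hcd, h⟩ := hs
    rw [← glue_isolate h hcd, ← glue_isolate (hst h) hcd]
    exact glue_both _ _ c hc d hd hcd <| ih _ (Prod.mk_lt_mk_of_lt_of_le (isolate_lt h hcd)
      (isolate_le _ _)) (isolate_mono _ hst)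
  by_cases ht : ∃ c ∈ X, ∃ d ∈ X, c ≠ d ∧ t c d ∧ ∀ z, s c z → z = c
  · obtain ⟨c, hc, d, hd, hcd, h, hiso⟩ := ht
    rw [← glue_isolate h hcd]
    exact glue_right _ _ c hc d hd hcd <| ih _ (Prod.mk_lt_mk_of_le_of_lt le_rfl
      (isolate_lt h hcd)) (le_isolate hst hiso)
  push Not at hs ht
  exact base s t hst hs ht

end Setoid

theorem Equiv.Perm.exists_apply_eq_and_apply_eq {α : Type*} {a b c d : α} (hab : a ≠ b)
    (hcd : c ≠ d) : ∃ f : Equiv.Perm α, f a = c ∧ f b = d :=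
  MulAction.is_two_pretransitive_iff.mp (Equiv.Perm.isMultiplyPretransitive α 2) hab hcd

namespace RamifiedPartition

open Setoid

variable {n : ℕ}

def ofPerm (f : Equiv.Perm (Fin n)) : PN n := Setoid.ker (Sum.elim id f)

def relabel (f : Equiv.Perm (Fin n)) (a : PN n) : PN n := a.comap (Sum.map id f)

theorem Du_le {a b : PN n} {s : Setoid (Row3 n)} (ha : ∀ u v, a u v → s (emb12 u) (emb12 v))
    (hb : ∀ u v, b u v → s (emb23 u) (emb23 v)) : Du a b ≤ s :=
  Setoid.eqvGen_le fun _ _ h => by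
    rcases h with ⟨u, v, huv, rfl, rfl⟩ | ⟨u, v, huv, rfl, rfl⟩
    exacts [ha u v huv, hb u v huv]

theorem Du_emb12 {a b : PN n} {u v : Row2 n} (h : a u v) : Du a b (emb12 u) (emb12 v) :=
  Relation.EqvGen.rel _ _ (Or.inl ⟨u, v, h, rfl, rfl⟩)

theorem Du_emb23 {a b : PN n} {u v : Row2 n} (h : b u v) : Du a b (emb23 u) (emb23 v) :=
  Relation.EqvGen.rel _ _ (Or.inr ⟨u, v, h, rfl, rfl⟩)

theorem Du_mono_right (a : PN n) {b b' : PN n} (h : b ≤ b') : Du a b ≤ Du a b' :=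
  Du_le (fun _ _ => Du_emb12) fun _ _ huv => Du_emb23 (h huv)

theorem emb23_injective : (emb23 : Row2 n → Row3 n).Injective := by
  rintro (_ | _) (_ | _) h <;> simp_all [emb23]

theorem emb13_injective : (emb13 : Row2 n → Row3 n).Injective := by
  rintro (_ | _) (_ | _) h <;> simp_all [emb13]

theorem emb12_ne_emb23_inr (u : Row2 n) (i : Fin n) : emb12 u ≠ emb23 (Sum.inr i) := by
  cases u <;> simp [emb12, emb23]

theorem comp_ofPerm (a : PN n) (f : Equiv.Perm (Fin n)) : comp a (ofPerm f) = relabel f a := by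
  let ρ : Row3 n → Row2 n := Sum.elim Sum.inl (Sum.elim Sum.inr (Sum.inr ∘ f))
  have hρ : ∀ u, ρ (emb23 u) = Sum.inr (Sum.elim id f u) := by rintro (_ | _) <;> rfl
  have upper : Du a (ofPerm f) ≤ a.comap ρ := Du_le (by rintro (_ | _) (_ | _) h <;> exact h)
    fun u v (h : Sum.elim id f u = Sum.elim id f v) => by
      rw [comap_rel, hρ, hρ, h]
  have bridge : ∀ x, Du a (ofPerm f) (emb13 x) (emb12 (Sum.map id f x)) := by
    rintro (i | q)
    · exact (Du a _).refl _
    · exact (Du a _).symm (Du_emb23 (u := Sum.inl (f q)) (v := Sum.inr q) rfl)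
  refine le_antisymm (fun x y h => ?_) fun x y h => ?_
  · have := upper h
    rcases x with _ | _ <;> rcases y with _ | _ <;> exact this
  · exact (Du a _).trans (bridge x) ((Du a _).trans (Du_emb12 h) ((Du a _).symm (bridge y)))

theorem Du_glue (a b : PN n) (c d : Row2 n) :
    Du a (glue c d b) = glue (emb23 c) (emb23 d) (Du a b) := by
  refine le_antisymm (Du_le (fun _ _ h => Or.inl (Du_emb12 h)) fun u v h => ?_)
    (glue_le (Du_mono_right a (le_glue c d b)) (Du_emb23 (Or.inr (Or.inl ⟨b.refl c, b.refl d⟩))))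
  rcases h with h | ⟨h₁, h₂⟩ | ⟨h₁, h₂⟩
  exacts [Or.inl (Du_emb23 h), Or.inr (Or.inl ⟨Du_emb23 h₁, Du_emb23 h₂⟩),
    Or.inr (Or.inr ⟨Du_emb23 h₁, Du_emb23 h₂⟩)]

theorem comp_glue (a b : PN n) (i j : Fin n) :
    comp a (glue (Sum.inr i) (Sum.inr j) b) = glue (Sum.inr i) (Sum.inr j) (comp a b) := by
  rw [comp, Du_glue]
  exact comap_glue emb13 (Sum.inr i) (Sum.inr j) (Du a b)

theorem Du_isolate (a b : PN n) {i : Fin n} {z : Row2 n} (hz : b (Sum.inr i) z)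
    (hzi : z ≠ Sum.inr i) :
    Du a (isolate {Sum.inr i} b) = isolate {emb23 (Sum.inr i)} (Du a b) := by
  set c : Row2 n := Sum.inr i
  refine le_antisymm (Du_le (fun u v h => ?_) fun u v h => ?_) ?_
  · exact Or.inr ⟨emb12_ne_emb23_inr u i, emb12_ne_emb23_inr v i, Du_emb12 h⟩
  · rcases h with rfl | ⟨hu, hv, h⟩
    · exact Or.inl rfl
    · exact Or.inr ⟨emb23_injective.ne hu, emb23_injective.ne hv, Du_emb23 h⟩
  -- a path of `Du a b` through `emb23 c` can be rerouted through `emb23 z`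
  let r₀ : Row2 n → Row2 n := fun u => if u = c then z else u
  let r : Row3 n → Row3 n := fun x => if x = emb23 c then emb23 z else x
  have hr : ∀ u, r (emb23 u) = emb23 (r₀ u) := fun u => by
    by_cases hu : u = c <;> simp [r, r₀, hu, emb23_injective.eq_iff]
  have hr12 : ∀ u, r (emb12 u) = emb12 u := fun u => if_neg (emb12_ne_emb23_inr u i)
  have hr₀ : ∀ u, r₀ u ≠ c ∧ b u (r₀ u) := fun u => by
    by_cases hu : u = c
    · simp only [r₀, hu, if_true]; exact ⟨hzi, hz⟩
    · simp only [r₀, hu, if_false]; exact ⟨hu, b.refl u⟩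
  have reroute : Du a b ≤ (Du a (isolate {c} b)).comap r := by
    refine Du_le (fun u v h => ?_) fun u v h => ?_
    · rw [comap_rel, hr12, hr12]
      exact Du_emb12 h
    · rw [comap_rel, hr, hr]
      exact Du_emb23 (Or.inr ⟨(hr₀ u).1, (hr₀ v).1,
        b.trans (b.symm (hr₀ u).2) (b.trans h (hr₀ v).2)⟩)
  rintro x y (rfl | ⟨hx, hy, h⟩)
  · exact (Du _ _).refl x
  · have hrx : r x = x := if_neg hx
    have hry : r y = y := if_neg hy
    simpa only [comap_rel, hrx, hry] using reroute h

theorem comp_isolate (a b : PN n) {i : Fin n} {z : Row2 n} (hz : b (Sum.inr i) z)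
    (hzi : z ≠ Sum.inr i) :
    comp a (isolate {Sum.inr i} b) = isolate {Sum.inr i} (comp a b) := by
  have hpre : emb13 ⁻¹' {emb23 (Sum.inr i)} = ({Sum.inr i} : Set (Row2 n)) := by
    ext (_ | _) <;> simp [emb13, emb23]
  rw [comp, Du_isolate a b hz hzi, comap_isolate emb13_injective, hpre, comp]

theorem oneP_eq_ofPerm_one : oneP n = ofPerm 1 := rfl

theorem relabel_one (a : PN n) : relabel 1 a = a :=
  Setoid.ext <| by rintro (_ | _) (_ | _) <;> rfl

theorem comp_oneP (a : PN n) : comp a (oneP n) = a := by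
  rw [oneP_eq_ofPerm_one, comp_ofPerm, relabel_one]

theorem Ai_eq_isolate (i : Fin n) : Ai i = isolate {Sum.inr i} (oneP n) := by
  refine Setoid.ext ?_
  intro x y
  rw [Ai, Setoid.ker_def, isolate_rel, oneP, Setoid.ker_def]
  rcases x with p | p <;> rcases y with q | q <;> simp <;> grind

theorem Aij_eq_glue (i j : Fin n) : Aij i j = glue (Sum.inr i) (Sum.inr j) (oneP n) := by
  refine Setoid.ext ?_
  intro x y
  rw [Aij, Setoid.ker_def, glue_rel, oneP, Setoid.ker_def, Setoid.ker_def, Setoid.ker_def]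
  rcases x with p | p <;> rcases y with q | q <;> simp <;> grind

theorem comp_Ai (a : PN n) (i : Fin n) : comp a (Ai i) = isolate {Sum.inr i} a := by
  rw [Ai_eq_isolate, comp_isolate a (oneP n) (z := Sum.inl i) rfl Sum.inl_ne_inr, comp_oneP]

theorem comp_Aij (a : PN n) (i j : Fin n) : comp a (Aij i j) = glue (Sum.inr i) (Sum.inr j) a := by
  rw [Aij_eq_glue, comp_glue, comp_oneP]

theorem comp_sigP (a : PN n) (i j : Fin n) : comp a (sigP i j) = relabel (Equiv.swap i j) a :=
  comp_ofPerm a _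


theorem relabel_mul (f g : Equiv.Perm (Fin n)) (a : PN n) :
    relabel (f * g) a = relabel g (relabel f a) :=
  Setoid.ext <| by rintro (_ | _) (_ | _) <;> rfl

theorem relabel_ofPerm (f g : Equiv.Perm (Fin n)) : relabel f (ofPerm g) = ofPerm (g * f) :=
  Setoid.ext <| by rintro (_ | _) (_ | _) <;> rfl

theorem relabel_isolate (f : Equiv.Perm (Fin n)) (q : Fin n) (a : PN n) :
    relabel f (isolate {Sum.inr (f q)} a) = isolate {Sum.inr q} (relabel f a) := by
  rw [relabel, comap_isolate (Sum.map_injective.2 ⟨Function.injective_id, f.injective⟩)]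
  congr 1
  ext (_ | _) <;> simp

theorem relabel_glue (f : Equiv.Perm (Fin n)) (p q : Fin n) (a : PN n) :
    relabel f (glue (Sum.inr (f p)) (Sum.inr (f q)) a) = glue (Sum.inr p) (Sum.inr q) (relabel f a) :=
  comap_glue (Sum.map id f) (Sum.inr p) (Sum.inr q) a

def products (n : ℕ) (hn : 2 ≤ n) : Set (PN n × PN n) :=
  {a | ∃ (hd : PN n × PN n) (tl : List (PN n × PN n)),
    hd ∈ Gset n hn ∧ (∀ g ∈ tl, g ∈ Gset n hn) ∧ tl.foldl rcomp hd = a}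

section products

variable {hn : 2 ≤ n} {a : PN n × PN n}

theorem mem_products_of_mem_Gset {g : PN n × PN n} (hg : g ∈ Gset n hn) : g ∈ products n hn :=
  ⟨g, [], hg, by simp, rfl⟩

theorem rcomp_mem_products {g : PN n × PN n} (ha : a ∈ products n hn) (hg : g ∈ Gset n hn) :
    rcomp a g ∈ products n hn := by
  obtain ⟨hd, tl, hhd, htl, rfl⟩ := ha
  refine ⟨hd, tl ++ [g], hhd, fun x hx => ?_, by simp⟩
  rcases List.mem_append.1 hx with hx | hx
  exacts [htl x hx, List.mem_singleton.1 hx ▸ hg]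

theorem relabel_mem_products (f : Equiv.Perm (Fin n)) (ha : a ∈ products n hn) :
    a.map (relabel f) (relabel f) ∈ products n hn := by
  obtain ⟨m, rfl⟩ : ∃ m, n = m + 1 := ⟨n - 1, by omega⟩
  have hf : f ∈ Submonoid.closure (Set.range fun i : Fin m => Equiv.swap i.castSucc i.succ) := by
    rw [Equiv.Perm.mclosure_swap_castSucc_succ]; trivial
  induction hf using Submonoid.closure_induction generalizing a with
  | mem g hg =>
    obtain ⟨i, rfl⟩ := hg
    have := rcomp_mem_products ha (Or.inr ⟨i, Nat.succ_lt_succ i.isLt, rfl⟩)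
    rwa [rcomp, comp_sigP, comp_sigP] at this
  | one => simpa only [Prod.map, relabel_one] using ha
  | mul f g _ _ hf hg => simpa only [Prod.map, relabel_mul] using hg (hf ha)

theorem mem_products_of_relabel (f : Equiv.Perm (Fin n))
    (ha : a.map (relabel f) (relabel f) ∈ products n hn) : a ∈ products n hn := by
  simpa only [Prod.map, ← relabel_mul, mul_inv_cancel, relabel_one] using
    relabel_mem_products f⁻¹ ha

theorem mem_products_of_conj {b g : PN n × PN n} (f : Equiv.Perm (Fin n))
    (ha : a ∈ products n hn) (hg : g ∈ Gset n hn)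
    (h : rcomp (a.map (relabel f) (relabel f)) g = b.map (relabel f) (relabel f)) :
    b ∈ products n hn :=
  mem_products_of_relabel f (h ▸ rcomp_mem_products (relabel_mem_products f ha) hg)

theorem isolate_fst_mem_products (i : Fin n) (ha : a ∈ products n hn) :
    (isolate {Sum.inr i} a.1, a.2) ∈ products n hn := by
  obtain ⟨f, rfl⟩ : ∃ f : Equiv.Perm (Fin n), f ⟨0, by omega⟩ = i :=
    ⟨Equiv.swap _ i, Equiv.swap_apply_left _ _⟩
  refine mem_products_of_conj f ha (g := (Ai ⟨0, by omega⟩, oneP n)) (by simp [Gset]) ?_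
  simp only [rcomp, Prod.map, comp_Ai, comp_oneP, relabel_isolate]

theorem isolate_mem_products (i : Fin n) (ha : a ∈ products n hn) :
    (isolate {Sum.inr i} a.1, isolate {Sum.inr i} a.2) ∈ products n hn := by
  obtain ⟨f, rfl⟩ : ∃ f : Equiv.Perm (Fin n), f ⟨0, by omega⟩ = i :=
    ⟨Equiv.swap _ i, Equiv.swap_apply_left _ _⟩
  refine mem_products_of_conj f ha (g := (Ai ⟨0, by omega⟩, Ai ⟨0, by omega⟩)) (by simp [Gset]) ?_
  simp only [rcomp, Prod.map, comp_Ai, relabel_isolate]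

theorem glue_snd_mem_products {i j : Fin n} (hij : i ≠ j) (ha : a ∈ products n hn) :
    (a.1, glue (Sum.inr i) (Sum.inr j) a.2) ∈ products n hn := by
  obtain ⟨f, rfl, rfl⟩ :=
    Equiv.Perm.exists_apply_eq_and_apply_eq (a := (⟨0, by omega⟩ : Fin n)) (b := ⟨1, by omega⟩)
      (by simp [Fin.ext_iff]) hij
  refine mem_products_of_conj f ha (g := (oneP n, Aij ⟨0, by omega⟩ ⟨1, by omega⟩))
    (by simp [Gset]) ?_
  simp only [rcomp, Prod.map, comp_Aij, comp_oneP, relabel_glue]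

theorem glue_mem_products {i j : Fin n} (hij : i ≠ j) (ha : a ∈ products n hn) :
    (glue (Sum.inr i) (Sum.inr j) a.1, glue (Sum.inr i) (Sum.inr j) a.2) ∈ products n hn := by
  obtain ⟨f, rfl, rfl⟩ :=
    Equiv.Perm.exists_apply_eq_and_apply_eq (a := (⟨0, by omega⟩ : Fin n)) (b := ⟨1, by omega⟩)
      (by simp [Fin.ext_iff]) hij
  refine mem_products_of_conj f ha
    (g := (Aij ⟨0, by omega⟩ ⟨1, by omega⟩, Aij ⟨0, by omega⟩ ⟨1, by omega⟩)) (by simp [Gset]) ?_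
  simp only [rcomp, Prod.map, comp_Aij, relabel_glue]

theorem oneP_mem_products : (oneP n, oneP n) ∈ products n hn := by
  have hσ : (sigP ⟨0, by omega⟩ ⟨0 + 1, hn⟩, sigP ⟨0, by omega⟩ ⟨0 + 1, hn⟩) ∈ Gset n hn :=
    Or.inr ⟨0, hn, rfl⟩
  have := rcomp_mem_products (mem_products_of_mem_Gset hσ) hσ
  rwa [rcomp, comp_sigP, sigP, ← ofPerm, relabel_ofPerm, Equiv.swap_mul_self,
    ← oneP_eq_ofPerm_one] at this

theorem isolate_image_mem_products {T₁ T₂ : Finset (Fin n)} (hT : T₂ ⊆ T₁)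
    (ha : a ∈ products n hn) :
    (isolate (Sum.inr '' ↑T₁) a.1, isolate (Sum.inr '' ↑T₂) a.2) ∈ products n hn := by
  induction T₁ using Finset.induction_on generalizing T₂ with
  | empty =>
    rw [Finset.subset_empty.1 hT]
    simpa only [Finset.coe_empty, Set.image_empty, isolate_empty] using ha
  | insert p T₁ hp ih =>
    simp only [Finset.coe_insert, Set.image_insert_eq, isolate_insert]
    by_cases hpT : p ∈ T₂
    · have hT' : T₂.erase p ⊆ T₁ := fun q hq => by
        have := Finset.mem_erase.1 hq
        exact (Finset.mem_insert.1 (hT this.2)).resolve_left this.1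
      rw [← Finset.insert_erase hpT, Finset.coe_insert, Set.image_insert_eq, isolate_insert]
      exact isolate_mem_products p (ih hT')
    · exact isolate_fst_mem_products p (ih fun q hq => (Finset.mem_insert.1 (hT hq)).resolve_left
        (ne_of_mem_of_not_mem hq hpT))

end products

-- the classes of `mirror t` are the sets `B ⊔ B′` for the classes `B` of `t`
def mirror (t : Setoid (Fin n)) : PN n := t.comap (Sum.elim id id)

theorem mirror_bot : mirror (⊥ : Setoid (Fin n)) = oneP n := rfl

theorem relabel_mirror (f : Equiv.Perm (Fin n)) (t : Setoid (Fin n)) :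
    relabel f (mirror t) = t.comap (Sum.elim id f) :=
  Setoid.ext <| by rintro (_ | _) (_ | _) <;> rfl

theorem mirror_mem_products {hn : 2 ≤ n} {t₁ t₂ : Setoid (Fin n)} (h : t₁ ≤ t₂) :
    (mirror t₁, mirror t₂) ∈ products n hn := by
  refine Setoid.le_induction_on_glue Set.univ (fun s t _ hs ht => ?_)
    (fun s t i _ j _ hij h => glue_mem_products (a := (mirror s, mirror t)) hij h)
    (fun s t i _ j _ hij h => glue_snd_mem_products (a := (mirror s, mirror t)) hij h) h
  have hs : s = ⊥ := eq_bot_iff.2 fun x y hxy => by_contra fun hne => hs x trivial y trivial hne hxy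
  subst hs
  have ht : t = ⊥ := eq_bot_iff.2 fun x y hxy => by_contra fun hne => by
    obtain ⟨z, hz, hzx⟩ := ht x trivial y trivial hne hxy
    exact hzx hz.symm
  rw [ht, mirror_bot]
  exact oneP_mem_products

def IsAttached (a : PN n) (q : Fin n) : Prop := ∃ i, a (Sum.inl i) (Sum.inr q)

theorem isolate_comap_top_eq (a : PN n) (π : Fin n → Fin n)
    (hπ : ∀ q, IsAttached a q → a (Sum.inl (π q)) (Sum.inr q))
    (hbot : ∀ p q, p ≠ q → a (Sum.inr p) (Sum.inr q) → IsAttached a p) :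
    isolate (Sum.inr '' {q | ¬ IsAttached a q}) ((a.comap Sum.inl).comap (Sum.elim id π)) = a := by
  have hbot' : ∀ p q, p ≠ q → a (Sum.inr p) (Sum.inr q) → IsAttached a q :=
    fun p q hpq h => hbot q p hpq.symm (a.symm h)
  refine Setoid.ext ?_
  rintro (i | p) (j | q) <;> simp only [isolate_rel, comap_rel, Sum.elim_inl, Sum.elim_inr,
    Set.mem_image, Set.mem_ofPred_eq, reduceCtorEq, Sum.inl.injEq, Sum.inr.injEq, id,
    exists_eq_right, not_not, and_false, exists_false, not_false_eq_true, true_and, false_or]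
  · exact ⟨fun h => h.elim (· ▸ a.refl _) id, Or.inr⟩
  · exact ⟨fun ⟨hq, h⟩ => a.trans h (hπ q hq), fun h => ⟨⟨i, h⟩, a.trans h (a.symm (hπ q ⟨i, h⟩))⟩⟩
  · exact ⟨fun ⟨hp, h⟩ => a.trans (a.symm (hπ p hp)) h,
      fun h => ⟨⟨j, a.symm h⟩, a.trans (hπ p ⟨j, a.symm h⟩) h⟩⟩
  · refine ⟨?_, fun h => ?_⟩
    · rintro (rfl | ⟨hp, hq, h⟩)
      exacts [a.refl _, a.trans (a.symm (hπ p hp)) (a.trans h (hπ q hq))]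
    · by_cases hpq : p = q
      · exact Or.inl hpq
      · exact Or.inr ⟨hbot p q hpq h, hbot' p q hpq h, a.trans (hπ p (hbot p q hpq h))
          (a.trans h (a.symm (hπ q (hbot' p q hpq h))))⟩

theorem IsAttached.mono {s t : PN n} (hst : s ≤ t) {q : Fin n} (h : IsAttached s q) :
    IsAttached t q :=
  let ⟨i, hi⟩ := h; ⟨i, hst hi⟩

theorem IsAttached.of_rel {s : PN n} (hs : ∀ p q, p ≠ q → ¬ s (Sum.inr p) (Sum.inr q))
    {p : Fin n} {z : Row2 n} (h : s (Sum.inr p) z) (hz : z ≠ Sum.inr p) : IsAttached s p := by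
  rcases z with i | q
  · exact ⟨i, s.symm h⟩
  · exact absurd h (hs p q fun hpq => hz (hpq ▸ rfl))

theorem exists_perm_representatives {s t : PN n} (hst : s ≤ t)
    (hs : ∀ p q, p ≠ q → ¬ s (Sum.inr p) (Sum.inr q))
    (ht : ∀ p q, p ≠ q → t (Sum.inr p) (Sum.inr q) → ∃ z, s (Sum.inr p) z ∧ z ≠ Sum.inr p) :
    ∃ π : Equiv.Perm (Fin n), (∀ q, IsAttached s q → s (Sum.inl (π q)) (Sum.inr q)) ∧
      ∀ q, IsAttached t q → t (Sum.inl (π q)) (Sum.inr q) := by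
  let ρ : {q // IsAttached t q} → Fin n := fun q =>
    if h : IsAttached s q.1 then h.choose else q.2.choose
  have hρs : ∀ q (h : IsAttached s q.1), s (Sum.inl (ρ q)) (Sum.inr q.1) := fun q h => by
    simp only [ρ, dif_pos h]; exact h.choose_spec
  have hρt : ∀ q, t (Sum.inl (ρ q)) (Sum.inr q.1) := fun q => by
    by_cases h : IsAttached s q.1
    · exact hst (hρs q h)
    · simp only [ρ, dif_neg h]; exact q.2.choose_spec
  -- two bottom points in one class of `t` are attached in `s`, hence in one class of `s`
  have hρ : ρ.Injective := fun q₁ q₂ he => Subtype.ext <| by_contra fun hne => by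
    have h₁₂ : t (Sum.inr q₁.1) (Sum.inr q₂.1) := t.trans (t.symm (hρt q₁)) (he ▸ hρt q₂)
    obtain ⟨z₁, hz₁, hzq₁⟩ := ht _ _ hne h₁₂
    obtain ⟨z₂, hz₂, hzq₂⟩ := ht _ _ (Ne.symm hne) (t.symm h₁₂)
    exact hs _ _ hne (s.trans (s.symm (hρs q₁ (.of_rel hs hz₁ hzq₁)))
      (he ▸ hρs q₂ (.of_rel hs hz₂ hzq₂)))
  obtain ⟨π, hπ⟩ := Equiv.Perm.exists_extending_pair Subtype.val ρ Subtype.val_injective hρ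
  refine ⟨π, fun q hq => ?_, fun q hq => ?_⟩
  · rw [show π q = ρ ⟨q, hq.mono hst⟩ from hπ ⟨q, _⟩]
    exact hρs ⟨q, hq.mono hst⟩ hq
  · rw [show π q = ρ ⟨q, hq⟩ from hπ ⟨q, _⟩]
    exact hρt ⟨q, hq⟩

theorem mem_products_of_reduced {hn : 2 ≤ n} {s t : PN n} (hst : s ≤ t)
    (hs : ∀ p q, p ≠ q → ¬ s (Sum.inr p) (Sum.inr q))
    (ht : ∀ p q, p ≠ q → t (Sum.inr p) (Sum.inr q) → ∃ z, s (Sum.inr p) z ∧ z ≠ Sum.inr p) :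
    (s, t) ∈ products n hn := by
  obtain ⟨π, hπs, hπt⟩ := exists_perm_representatives hst hs ht
  have hmirror := relabel_mem_products π
    (mirror_mem_products (hn := hn) (t₁ := s.comap Sum.inl) (t₂ := t.comap Sum.inl) fun _ _ h => hst h)
  have hmem := isolate_image_mem_products (T₁ := Finset.univ.filter (¬ IsAttached s ·))
    (T₂ := Finset.univ.filter (¬ IsAttached t ·)) (Finset.monotone_filter_right _
      fun _ _ => mt (IsAttached.mono hst)) hmirror
  rwa [Prod.map, relabel_mirror, relabel_mirror, Finset.coe_filter_univ, Finset.coe_filter_univ,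
    isolate_comap_top_eq s π hπs fun p q hpq h => absurd h (hs p q hpq),
    isolate_comap_top_eq t π hπt fun p q hpq h =>
      let ⟨_, hz, hzp⟩ := ht p q hpq h; (IsAttached.of_rel hs hz hzp).mono hst] at hmem

/-- for `n ≥ 2`, every 2-ramified partition of `[n] ⊔ [n]′` is a
finite `∘`-product of elements of `G_n`. -/
theorem Gset_generates (n : ℕ) (hn : 2 ≤ n) (a : PN n × PN n) (ha : a.1 ≤ a.2) :
    ∃ (hd : PN n × PN n) (tl : List (PN n × PN n)),
      hd ∈ Gset n hn ∧ (∀ g ∈ tl, g ∈ Gset n hn) ∧ tl.foldl rcomp hd = a := by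
  refine Setoid.le_induction_on_glue (P := fun s t => (s, t) ∈ products n hn) (Set.range Sum.inr)
    (fun s t hst hs ht => mem_products_of_reduced hst ?_ ?_) ?_ ?_ ha
  · exact fun p q hpq => hs _ ⟨p, rfl⟩ _ ⟨q, rfl⟩ (Sum.inr_injective.ne hpq)
  · exact fun p q hpq => ht _ ⟨p, rfl⟩ _ ⟨q, rfl⟩ (Sum.inr_injective.ne hpq)
  · rintro s t _ ⟨i, rfl⟩ _ ⟨j, rfl⟩ hij h
    exact glue_mem_products (a := (s, t)) (ne_of_apply_ne _ hij) h
  · rintro s t _ ⟨i, rfl⟩ _ ⟨j, rfl⟩ hij h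
    exact glue_snd_mem_products (a := (s, t)) (ne_of_apply_ne _ hij) h

end RamifiedPartition
end

section
/- Let a, b ∈ p_n^{(2)} be such that #((a∘b)₂) = #(a₂). Then the propagating indices λ(a∘b) and λ(a) have the same length, and λ(a∘b)_i ≤ λ(a)_i for every position i. -/
attribute [local instance] Classical.propDecidable

namespace RamifiedPartition

variable {n : ℕ}

/-- A part (equivalence class) of a partition of `[n] ⊔ [n]′` is propagating if
it contains elements of both `[n]` and `[n]′`. -/
def IsPropClass (a : PN n) (C : Quotient a) : Prop :=
  (∃ i : Fin n, Quotient.mk a (Sum.inl i) = C) ∧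
  (∃ j : Fin n, Quotient.mk a (Sum.inr j) = C)

/-- `#(a)`: the number of propagating parts of `a`. -/
noncomputable def propNum (a : PN n) : ℕ := Nat.card {C : Quotient a // IsPropClass a C}

end RamifiedPartition

namespace RamifiedPartition

variable {n : ℕ}

/-- The part `D` of `a₁` is contained in the part `C` of `a₂`. -/
def ClassLE (a₁ : PN n) (D : Quotient a₁) (a₂ : PN n) (C : Quotient a₂) : Prop :=
  ∀ x : Row2 n, Quotient.mk a₁ x = D → Quotient.mk a₂ x = C

/-- The multiset of entries of the propagating index `λ(a)` of `a = (a₁,a₂)`: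
one entry for each propagating part `q` of `a₂`, namely the number of
propagating parts of `a₁` contained in `q`. -/
noncomputable def propIndexM (a : PN n × PN n) : Multiset ℕ :=
  letI : Fintype {C : Quotient a.2 // IsPropClass a.2 C} := Fintype.ofFinite _
  (Finset.univ : Finset {C : Quotient a.2 // IsPropClass a.2 C}).val.map
    (fun C => Nat.card {D : Quotient a.1 // IsPropClass a.1 D ∧ ClassLE a.1 D a.2 C.1})

/-- The propagating index `λ(a)` as a weakly decreasing list. -/
noncomputable def propIndex (a : PN n × PN n) : List ℕ :=
  (Multiset.sort (propIndexM a) (· ≤ ·)).reverse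

end RamifiedPartition


namespace RamifiedPartition

variable {n : ℕ}


/-- The one-step generating relation of `Du`. -/
def DuStep (a b : PN n) : Row3 n → Row3 n → Prop := fun x y =>
    (∃ u v : Row2 n, a.r u v ∧ x = emb12 u ∧ y = emb12 v) ∨
    (∃ u v : Row2 n, b.r u v ∧ x = emb23 u ∧ y = emb23 v)

lemma du_r_iff {a b : PN n} {x y : Row3 n} :
    (Du a b).r x y ↔ Relation.EqvGen (DuStep a b) x y := Iff.rfl

lemma duStep_symm {a b : PN n} : Symmetric (DuStep a b) := by
  intro x y h
  rcases h with ⟨u, v, huv, hu, hv⟩ | ⟨u, v, huv, hu, hv⟩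
  · exact Or.inl ⟨v, u, a.symm' huv, hv, hu⟩
  · exact Or.inr ⟨v, u, b.symm' huv, hv, hu⟩

lemma duStep_refl {a b : PN n} : Reflexive (DuStep a b) := by
  intro x
  match x with
  | Sum.inl i => exact Or.inl ⟨Sum.inl i, Sum.inl i, a.refl' _, rfl, rfl⟩
  | Sum.inr (Sum.inl i) => exact Or.inl ⟨Sum.inr i, Sum.inr i, a.refl' _, rfl, rfl⟩
  | Sum.inr (Sum.inr i) => exact Or.inr ⟨Sum.inr i, Sum.inr i, b.refl' _, rfl, rfl⟩

lemma du_r_iff_rtg {a b : PN n} {x y : Row3 n} :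
    (Du a b).r x y ↔ Relation.ReflTransGen (DuStep a b) x y := by
  rw [du_r_iff]
  constructor
  · intro h
    induction h with
    | rel x y hxy => exact Relation.ReflTransGen.single hxy
    | refl x => exact Relation.ReflTransGen.refl
    | symm x y _ ih => haveI : Std.Symm (DuStep a b) := ⟨duStep_symm⟩; exact Std.Symm.symm _ _ ih
    | trans x y z _ _ ih1 ih2 => exact ih1.trans ih2
  · intro h
    induction h with
    | refl => exact Relation.EqvGen.refl _
    | tail _ hbc ih => exact Relation.EqvGen.trans _ _ _ ih (Relation.EqvGen.rel _ _ hbc)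

/-- Going from the top row anywhere, either you stay in the top row or you
pass through a propagating part of `a`. -/
lemma cross_aux {a b : PN n} {x z : Row3 n} (hx : ∃ i : Fin n, x = Sum.inl i)
    (h : Relation.ReflTransGen (DuStep a b) x z) :
    (∃ i : Fin n, z = Sum.inl i ∧ Relation.ReflTransGen (DuStep a b) x z) ∨
    (∃ i j : Fin n, a.r (Sum.inl i) (Sum.inr j) ∧
      Relation.ReflTransGen (DuStep a b) x (Sum.inl i)) := by
  induction h with
  | refl => obtain ⟨i, rfl⟩ := hx; exact Or.inl ⟨i, rfl, Relation.ReflTransGen.refl⟩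
  | @tail w z hxw hwz ih =>
    rcases ih with ⟨i, rfl, hreach⟩ | hr
    · rcases hwz with ⟨u, v, huv, hu, hv⟩ | ⟨u, v, huv, hu, hv⟩
      · match u, hu with
        | Sum.inl i', hu =>
          have hii : i' = i := by simpa [emb12] using hu.symm
          subst hii
          match v, hv with
          | Sum.inl i'', hv =>
            exact Or.inl ⟨i'', by simpa [emb12] using hv,
              hreach.tail (Or.inl ⟨Sum.inl i', Sum.inl i'', huv, rfl, hv⟩)⟩
          | Sum.inr j, hv =>
            exact Or.inr ⟨i', j, huv, hreach⟩
        | Sum.inr j, hu => simp [emb12] at hu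
      · exfalso
        match u, hu with
        | Sum.inl i', hu => simp [emb23] at hu
        | Sum.inr j, hu => simp [emb23] at hu
    · exact Or.inr hr

/-- Any `Du`-class meeting both the top and bottom rows contains (the `emb12`
image of) a propagating part of `a`. -/
lemma exists_prop_class {a b : PN n} {i1 k : Fin n}
    (h : (Du a b).r (Sum.inl i1) (Sum.inr (Sum.inr k))) :
    ∃ i j : Fin n, a.r (Sum.inl i) (Sum.inr j) ∧ (Du a b).r (Sum.inl i1) (Sum.inl i) := by
  have h' := du_r_iff_rtg.mp h
  rcases cross_aux ⟨i1, rfl⟩ h' with ⟨i, hz, _⟩ | ⟨i, j, hij, hreach⟩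
  · exact absurd hz (by simp)
  · exact ⟨i, j, hij, du_r_iff_rtg.mpr hreach⟩

lemma du_mono {a1 a2 b1 b2 : PN n} (ha : a1 ≤ a2) (hb : b1 ≤ b2) {x y : Row3 n}
    (h : (Du a1 b1).r x y) : (Du a2 b2).r x y := by
  rw [du_r_iff] at h ⊢
  refine Relation.EqvGen.mono ?_ _ _ h
  intro x y hxy
  rcases hxy with ⟨u, v, huv, hu, hv⟩ | ⟨u, v, huv, hu, hv⟩
  · exact Or.inl ⟨u, v, Setoid.le_def.mp ha huv, hu, hv⟩
  · exact Or.inr ⟨u, v, Setoid.le_def.mp hb huv, hu, hv⟩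

/-- The map on quotients induced by `emb12`. -/
def q12 (a b : PN n) : Quotient a → Quotient (Du a b) :=
  Quotient.map' emb12 (fun u v h => Relation.EqvGen.rel _ _ (Or.inl ⟨u, v, h, rfl, rfl⟩))

/-- The map on quotients induced by `emb13`. -/
def q13 (a b : PN n) : Quotient (comp a b) → Quotient (Du a b) :=
  Quotient.map' emb13 (fun _ _ h => h)

lemma q12_mk (a b : PN n) (x : Row2 n) :
    q12 a b (Quotient.mk a x) = Quotient.mk (Du a b) (emb12 x) := rfl

lemma q13_mk (a b : PN n) (x : Row2 n) :
    q13 a b (Quotient.mk (comp a b) x) = Quotient.mk (Du a b) (emb13 x) := rfl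

lemma q13_inj (a b : PN n) : Function.Injective (q13 a b) := by
  intro x y
  induction x using Quotient.ind with | _ u => ?_
  induction y using Quotient.ind with | _ v => ?_
  intro h
  have h' : Quotient.mk (Du a b) (emb13 u) = Quotient.mk (Du a b) (emb13 v) := h
  have h2 : (Du a b).r (emb13 u) (emb13 v) := Quotient.exact h'
  exact Quotient.sound h2



lemma countP_le_of_rel {s t : Multiset ℕ} (h : Multiset.Rel (· ≤ ·) s t) (v : ℕ) :
    Multiset.countP (· < v) t ≤ Multiset.countP (· < v) s := by
  induction h with
  | zero => simp
  | @cons a b s t hab hst ih =>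
      rw [Multiset.countP_cons, Multiset.countP_cons]
      have hif : (if (b < v) then 1 else 0) ≤ if (a < v) then 1 else 0 := by
        split_ifs with h1 h2
        · omega
        · exact absurd (lt_of_le_of_lt hab h1) h2
        · omega
        · omega
      omega

lemma sorted_getElem_le_of_rel {s t : Multiset ℕ} (h : Multiset.Rel (· ≤ ·) s t)
    (j : ℕ) (hjs : j < (Multiset.sort s (· ≤ ·)).length)
    (hjt : j < (Multiset.sort t (· ≤ ·)).length) :
    (Multiset.sort s (· ≤ ·))[j] ≤ (Multiset.sort t (· ≤ ·))[j] := by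
  by_contra hcon
  push_neg at hcon
  set l := Multiset.sort s (· ≤ ·) with hl
  set m := Multiset.sort t (· ≤ ·) with hm
  set v := l[j] with hv
  have hsortl : l.Pairwise (· ≤ ·) := Multiset.pairwise_sort _ _
  have hsortm : m.Pairwise (· ≤ ·) := Multiset.pairwise_sort _ _
  have hpl := List.pairwise_iff_getElem.mp hsortl
  have hpm := List.pairwise_iff_getElem.mp hsortm
  -- count in m is at least j+1
  have hm1 : j + 1 ≤ List.countP (fun x => decide (x < v)) m := by
    have h1 : List.countP (fun x => decide (x < v)) (m.take (j+1)) = (m.take (j+1)).length := by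
      rw [List.countP_eq_length]
      intro x hx
      obtain ⟨idx, hidx, rfl⟩ := List.mem_iff_getElem.mp hx
      have hidx' : idx < m.length := lt_of_lt_of_le hidx (by simpa using List.length_take_le (j+1) m)
      rw [List.getElem_take]
      have hidxj : idx ≤ j := by rw [List.length_take] at hidx; omega
      have hle : m[idx] ≤ m[j] := by
        rcases lt_or_eq_of_le hidxj with h' | h'
        · exact hpm idx j hidx' hjt h'
        · subst h'; exact le_refl _
      simp only [decide_eq_true_iff]
      exact lt_of_le_of_lt hle hcon
    have h2 : (m.take (j+1)).length = j + 1 := by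
      rw [List.length_take]; omega
    calc j + 1 = List.countP (fun x => decide (x < v)) (m.take (j+1)) := by rw [h1, h2]
    _ ≤ List.countP (fun x => decide (x < v)) m := (List.take_sublist _ _).countP_le
  -- count in l is at most j
  have hl1 : List.countP (fun x => decide (x < v)) l ≤ j := by
    conv_lhs => rw [← List.take_append_drop j l]
    rw [List.countP_append]
    have h1 : List.countP (fun x => decide (x < v)) (l.take j) ≤ j := by
      calc List.countP (fun x => decide (x < v)) (l.take j) ≤ (l.take j).length :=
        List.countP_le_length
      _ ≤ j := by rw [List.length_take]; omega
    have h2 : List.countP (fun x => decide (x < v)) (l.drop j) = 0 := by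
      rw [List.countP_eq_zero]
      intro x hx
      obtain ⟨idx, hidx, rfl⟩ := List.mem_iff_getElem.mp hx
      rw [List.getElem_drop]
      have hji : j + idx < l.length := by rw [List.length_drop] at hidx; omega
      have hge : v ≤ l[j + idx] := by
        rcases Nat.eq_zero_or_pos idx with h' | h'
        · subst h'; rw [hv]; simp
        · exact hpl j (j+idx) hjs hji (by omega)
      simp only [decide_eq_true_iff]
      omega
    omega
  -- transfer to multisets
  have hcl : Multiset.countP (· < v) s = List.countP (fun x => decide (x < v)) l := by
    conv_lhs => rw [← Multiset.sort_eq s (· ≤ ·)]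
    rw [Multiset.coe_countP]
  have hcm : Multiset.countP (· < v) t = List.countP (fun x => decide (x < v)) m := by
    conv_lhs => rw [← Multiset.sort_eq t (· ≤ ·)]
    rw [Multiset.coe_countP]
  have := countP_le_of_rel h v
  omega

lemma propIndex_le_of_rel {s t : Multiset ℕ}
    (h : Multiset.Rel (· ≤ ·) s t) :
    (Multiset.sort s (· ≤ ·)).reverse.length = (Multiset.sort t (· ≤ ·)).reverse.length ∧
    ∀ (i : ℕ) (h₁ : i < (Multiset.sort s (· ≤ ·)).reverse.length)
      (h₂ : i < (Multiset.sort t (· ≤ ·)).reverse.length),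
      (Multiset.sort s (· ≤ ·)).reverse.get ⟨i, h₁⟩ ≤ (Multiset.sort t (· ≤ ·)).reverse.get ⟨i, h₂⟩ := by
  have hcard := Multiset.card_eq_card_of_rel h
  have hlen : (Multiset.sort s (· ≤ ·)).length = (Multiset.sort t (· ≤ ·)).length := by
    rw [Multiset.length_sort, Multiset.length_sort, hcard]
  constructor
  · simpa using hlen
  · intro i h₁ h₂
    simp only [List.get_eq_getElem, List.getElem_reverse]
    have hs : (Multiset.sort s (· ≤ ·)).length - 1 - i < (Multiset.sort s (· ≤ ·)).length := by
      simp only [List.length_reverse] at h₁; omega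
    have ht : (Multiset.sort t (· ≤ ·)).length - 1 - i < (Multiset.sort t (· ≤ ·)).length := by
      simp only [List.length_reverse] at h₂; omega
    have ht' : (Multiset.sort s (· ≤ ·)).length - 1 - i < (Multiset.sort t (· ≤ ·)).length := by
      omega
    have heq : (Multiset.sort t (· ≤ ·))[(Multiset.sort t (· ≤ ·)).length - 1 - i] =
        (Multiset.sort t (· ≤ ·))[(Multiset.sort s (· ≤ ·)).length - 1 - i] := by
      have h? : (Multiset.sort t (· ≤ ·))[(Multiset.sort t (· ≤ ·)).length - 1 - i]? =
          (Multiset.sort t (· ≤ ·))[(Multiset.sort s (· ≤ ·)).length - 1 - i]? := by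
        have : (Multiset.sort t (· ≤ ·)).length - 1 - i = (Multiset.sort s (· ≤ ·)).length - 1 - i := by
          omega
        rw [this]
      rw [List.getElem?_eq_getElem ht, List.getElem?_eq_getElem ht'] at h?
      exact Option.some.inj h?
    rw [heq]
    exact sorted_getElem_le_of_rel h _ hs ht'



lemma exists_section (a b : PN n) (C : Quotient (comp a b)) (hC : IsPropClass (comp a b) C) :
    ∃ P : Quotient a, IsPropClass a P ∧ q12 a b P = q13 a b C := by
  obtain ⟨⟨i1, hi1⟩, ⟨k, hk⟩⟩ := hC
  have hrel : (Du a b).r (Sum.inl i1) (Sum.inr (Sum.inr k)) := by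
    have h' : (comp a b).r (Sum.inl i1) (Sum.inr k) := Quotient.exact (hi1.trans hk.symm)
    exact h'
  obtain ⟨i, j, hij, hdu⟩ := exists_prop_class hrel
  refine ⟨Quotient.mk a (Sum.inl i), ⟨⟨i, rfl⟩, ⟨j, Quotient.sound (a.symm' hij)⟩⟩, ?_⟩
  rw [← hi1, q12_mk, q13_mk]
  exact Quotient.sound ((Du a b).symm' hdu)

lemma rel_propIndexM (a b : PN n × PN n) (ha : a.1 ≤ a.2) (hb : b.1 ≤ b.2)
    (h : propNum (rcomp a b).2 = propNum a.2) :
    Multiset.Rel (· ≤ ·) (propIndexM (rcomp a b)) (propIndexM a) := by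
  classical
  obtain ⟨a1, a2⟩ := a
  obtain ⟨b1, b2⟩ := b
  simp only at ha hb h ⊢
  set S := {C : Quotient a2 // IsPropClass a2 C} with hSdef
  set T := {C : Quotient (comp a2 b2) // IsPropClass (comp a2 b2) C} with hTdef
  have hsec : ∀ C : T, ∃ P : S, q12 a2 b2 P.val = q13 a2 b2 C.val := by
    intro C
    obtain ⟨P, hP, hq⟩ := exists_section a2 b2 C.val C.prop
    exact ⟨⟨P, hP⟩, hq⟩
  choose sec hsecq using hsec
  have hsecinj : Function.Injective sec := by
    intro C C' hCC'
    apply Subtype.ext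
    apply q13_inj a2 b2
    rw [← hsecq C, ← hsecq C', hCC']
  have hcard : Nat.card T = Nat.card S := h
  have hbij : Function.Bijective sec :=
    (Nat.bijective_iff_injective_and_card sec).mpr ⟨hsecinj, hcard⟩
  have hginj : ∀ P P' : S, q12 a2 b2 P.val = q12 a2 b2 P'.val → P = P' := by
    intro P P' hq
    obtain ⟨C, rfl⟩ := hbij.surjective P
    obtain ⟨C', rfl⟩ := hbij.surjective P'
    rw [hsecq C, hsecq C'] at hq
    exact congrArg sec (Subtype.ext (q13_inj a2 b2 hq))
  have hcount : ∀ C : T,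
      Nat.card {D : Quotient (comp a1 b1) //
        IsPropClass (comp a1 b1) D ∧ ClassLE (comp a1 b1) D (comp a2 b2) C.val}
      ≤ Nat.card {D : Quotient a1 // IsPropClass a1 D ∧ ClassLE a1 D a2 (sec C).val} := by
    intro C
    have hex : ∀ D : {D : Quotient (comp a1 b1) //
        IsPropClass (comp a1 b1) D ∧ ClassLE (comp a1 b1) D (comp a2 b2) C.val},
        ∃ p : Fin n × Fin n × Fin n,
          a1.r (Sum.inl p.1) (Sum.inr p.2.1) ∧
          Quotient.mk (comp a1 b1) (Sum.inl p.2.2) = D.val ∧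
          (Du a1 b1).r (Sum.inl p.2.2) (Sum.inl p.1) := by
      intro D
      obtain ⟨⟨i1, hi1⟩, ⟨k, hk⟩⟩ := D.prop.1
      have hrel : (Du a1 b1).r (Sum.inl i1) (Sum.inr (Sum.inr k)) := by
        have h' : (comp a1 b1).r (Sum.inl i1) (Sum.inr k) := Quotient.exact (hi1.trans hk.symm)
        exact h'
      obtain ⟨i, j, hij, hdu⟩ := exists_prop_class hrel
      exact ⟨⟨i, j, i1⟩, hij, hi1, hdu⟩
    choose p hp1 hp2 hp3 using hex
    have hmem : ∀ D, IsPropClass a1 (Quotient.mk a1 (Sum.inl (p D).1)) ∧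
        ClassLE a1 (Quotient.mk a1 (Sum.inl (p D).1)) a2 (sec C).val := by
      intro D
      constructor
      · exact ⟨⟨(p D).1, rfl⟩, ⟨(p D).2.1, Quotient.sound (a1.symm' (hp1 D))⟩⟩
      · intro x hx
        have hxa1 : a1.r x (Sum.inl (p D).1) := Quotient.exact hx
        have hxa2 : a2.r x (Sum.inl (p D).1) := Setoid.le_def.mp ha hxa1
        have hkey : Quotient.mk a2 (Sum.inl (p D).1) = (sec C).val := by
          have hprop : IsPropClass a2 (Quotient.mk a2 (Sum.inl (p D).1)) :=
            ⟨⟨(p D).1, rfl⟩, ⟨(p D).2.1,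
              Quotient.sound (a2.symm' (Setoid.le_def.mp ha (hp1 D)))⟩⟩
          have hqeq : q12 a2 b2 (Quotient.mk a2 (Sum.inl (p D).1)) = q12 a2 b2 (sec C).val := by
            rw [hsecq C, q12_mk]
            have hC1 : Quotient.mk (comp a2 b2) (Sum.inl (p D).2.2) = C.val :=
              D.prop.2 _ (hp2 D)
            rw [← hC1, q13_mk]
            exact Quotient.sound ((Du a2 b2).symm' (du_mono ha hb (hp3 D)))
          exact congrArg Subtype.val (hginj ⟨_, hprop⟩ (sec C) hqeq)
        rw [← hkey]
        exact Quotient.sound hxa2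
    refine Nat.card_le_card_of_injective
      (fun D => ⟨Quotient.mk a1 (Sum.inl (p D).1), hmem D⟩) ?_
    intro D D' hDD'
    have hval : Quotient.mk a1 (Sum.inl (p D).1) = Quotient.mk a1 (Sum.inl (p D').1) :=
      congrArg Subtype.val hDD'
    have h1 : a1.r (Sum.inl (p D).1) (Sum.inl (p D').1) := Quotient.exact hval
    have hdu12 : (Du a1 b1).r (Sum.inl (p D).1 : Row3 n) (Sum.inl (p D').1) :=
      Relation.EqvGen.rel _ _ (Or.inl ⟨Sum.inl (p D).1, Sum.inl (p D').1, h1, rfl, rfl⟩)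
    have hchain : (Du a1 b1).r (Sum.inl (p D).2.2 : Row3 n) (Sum.inl (p D').2.2) :=
      (Du a1 b1).trans' (hp3 D) ((Du a1 b1).trans' hdu12 ((Du a1 b1).symm' (hp3 D')))
    have hcomp : (comp a1 b1).r (Sum.inl (p D).2.2) (Sum.inl (p D').2.2) := hchain
    apply Subtype.ext
    rw [← hp2 D, ← hp2 D']
    exact Quotient.sound hcomp
  -- multiset part
  letI instT : Fintype T := Fintype.ofFinite _
  letI instS : Fintype S := Fintype.ofFinite _
  let e : T ≃ S := Equiv.ofBijective sec hbij
  have hTu : propIndexM (rcomp (a1, a2) (b1, b2)) = (Finset.univ : Finset T).val.map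
      (fun C => Nat.card {D : Quotient (comp a1 b1) //
        IsPropClass (comp a1 b1) D ∧ ClassLE (comp a1 b1) D (comp a2 b2) C.val}) := rfl
  have hSu : propIndexM (a1, a2) = (Finset.univ : Finset S).val.map
      (fun P => Nat.card {D : Quotient a1 // IsPropClass a1 D ∧ ClassLE a1 D a2 P.val}) := rfl
  rw [hTu, hSu]
  have huniv : (Finset.univ : Finset S).val = (Finset.univ : Finset T).val.map e := by
    rw [← Finset.univ_map_equiv_to_embedding e, Finset.map_val]
    rfl
  rw [huniv, Multiset.map_map]
  rw [Multiset.rel_map]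
  apply Multiset.rel_refl_of_refl_on
  intro C _
  exact hcount C


end RamifiedPartition

namespace RamifiedPartition

/-- if `#((a∘b)₂) = #(a₂)` then the propagating indices
`λ(a∘b)` and `λ(a)` have the same length and `λ(a∘b)_i ≤ λ(a)_i` for every
position `i`. -/
theorem propIndex_le_of_propNum_eq (n : ℕ) (a b : PN n × PN n)
    (ha : a.1 ≤ a.2) (hb : b.1 ≤ b.2)
    (h : propNum (rcomp a b).2 = propNum a.2) :
    (propIndex (rcomp a b)).length = (propIndex a).length ∧
    ∀ (i : ℕ) (h₁ : i < (propIndex (rcomp a b)).length)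
      (h₂ : i < (propIndex a).length),
      (propIndex (rcomp a b)).get ⟨i, h₁⟩ ≤ (propIndex a).get ⟨i, h₂⟩ := by
  have hrel := rel_propIndexM a b ha hb h
  exact propIndex_le_of_rel hrel

end RamifiedPartition
end

section
/- For a, b ∈ p_n, there exist c, d ∈ p_n with c∘b∘d = a if and only if #(a) ≤ #(b). -/
attribute [local instance] Classical.propDecidable

namespace RamifiedPartition

open Sum

variable {n : ℕ}

lemma mk_eq_iff {α : Sort*} {s : Setoid α} {u v : α} :
    Quotient.mk s u = Quotient.mk s v ↔ s.r u v :=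
  ⟨Quotient.exact, Quotient.sound⟩

/-- The "middle" setoid on `[n]′` generated by bottom-row moves of `x` and
top-row moves of `y`. -/
def mid (x y : PN n) : Setoid (Fin n) :=
  Relation.EqvGen.setoid (fun m m' => x.r (inr m) (inr m') ∨ y.r (inl m) (inl m'))

lemma mid_of_x {x y : PN n} {m m' : Fin n} (h : x.r (inr m) (inr m')) :
    (mid x y).r m m' := Relation.EqvGen.rel _ _ (Or.inl h)

lemma mid_of_y {x y : PN n} {m m' : Fin n} (h : y.r (inl m) (inl m')) :
    (mid x y).r m m' := Relation.EqvGen.rel _ _ (Or.inr h)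

/-- Invariant tag for the classes of `Du x y`. -/
noncomputable def G (x y : PN n) : Row3 n → Quotient (mid x y) ⊕ (Quotient x ⊕ Quotient y)
  | inl i => if h : ∃ m, x.r (inl i) (inr m) then Sum.inl (Quotient.mk (mid x y) h.choose)
      else Sum.inr (Sum.inl (Quotient.mk x (inl i)))
  | inr (inl m) => Sum.inl (Quotient.mk (mid x y) m)
  | inr (inr j) => if h : ∃ m, y.r (inr j) (inl m) then Sum.inl (Quotient.mk (mid x y) h.choose)
      else Sum.inr (Sum.inr (Quotient.mk y (inr j)))

lemma G_mid {x y : PN n} (m : Fin n) :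
    G x y (inr (inl m)) = Sum.inl (Quotient.mk (mid x y) m) := rfl

lemma G_top_pos {x y : PN n} {i m : Fin n} (h : x.r (inl i) (inr m)) :
    G x y (inl i) = Sum.inl (Quotient.mk (mid x y) m) := by
  have he : ∃ m, x.r (inl i) (inr m) := ⟨m, h⟩
  simp only [G, dif_pos he]
  exact congrArg Sum.inl (Quotient.sound (mid_of_x (x.trans' (x.symm' he.choose_spec) h)))

lemma G_top_neg {x y : PN n} {i : Fin n} (h : ¬ ∃ m, x.r (inl i) (inr m)) :
    G x y (inl i) = Sum.inr (Sum.inl (Quotient.mk x (inl i))) := by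
  simp only [G, dif_neg h]

lemma G_bot_pos {x y : PN n} {j m : Fin n} (h : y.r (inr j) (inl m)) :
    G x y (inr (inr j)) = Sum.inl (Quotient.mk (mid x y) m) := by
  have he : ∃ m, y.r (inr j) (inl m) := ⟨m, h⟩
  simp only [G, dif_pos he]
  exact congrArg Sum.inl (Quotient.sound (mid_of_y (y.trans' (y.symm' he.choose_spec) h)))

lemma G_bot_neg {x y : PN n} {j : Fin n} (h : ¬ ∃ m, y.r (inr j) (inl m)) :
    G x y (inr (inr j)) = Sum.inr (Sum.inr (Quotient.mk y (inr j))) := by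
  simp only [G, dif_neg h]

lemma G_emb12 {x y : PN n} {u v : Row2 n} (h : x.r u v) :
    G x y (emb12 u) = G x y (emb12 v) := by
  match u, v with
  | inl i, inl i' =>
    show G x y (inl i) = G x y (inl i')
    by_cases h1 : ∃ m, x.r (inl i) (inr m)
    · obtain ⟨m, hm⟩ := h1
      rw [G_top_pos hm, G_top_pos (x.trans' (x.symm' h) hm)]
    · have h2 : ¬ ∃ m, x.r (inl i') (inr m) := fun ⟨m, hm⟩ => h1 ⟨m, x.trans' h hm⟩
      rw [G_top_neg h1, G_top_neg h2, mk_eq_iff.mpr h]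
  | inl i, inr m =>
    show G x y (inl i) = G x y (inr (inl m))
    rw [G_top_pos h, G_mid]
  | inr m, inl i =>
    show G x y (inr (inl m)) = G x y (inl i)
    rw [G_top_pos (x.symm' h), G_mid]
  | inr m, inr m' =>
    exact congrArg Sum.inl (Quotient.sound (mid_of_x h))

lemma G_emb23 {x y : PN n} {u v : Row2 n} (h : y.r u v) :
    G x y (emb23 u) = G x y (emb23 v) := by
  match u, v with
  | inl m, inl m' =>
    exact congrArg Sum.inl (Quotient.sound (mid_of_y h))
  | inl m, inr j =>
    show G x y (inr (inl m)) = G x y (inr (inr j))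
    rw [G_bot_pos (y.symm' h), G_mid]
  | inr j, inl m =>
    show G x y (inr (inr j)) = G x y (inr (inl m))
    rw [G_bot_pos h, G_mid]
  | inr j, inr j' =>
    show G x y (inr (inr j)) = G x y (inr (inr j'))
    by_cases h1 : ∃ m, y.r (inr j) (inl m)
    · obtain ⟨m, hm⟩ := h1
      rw [G_bot_pos hm, G_bot_pos (y.trans' (y.symm' h) hm)]
    · have h2 : ¬ ∃ m, y.r (inr j') (inl m) := fun ⟨m, hm⟩ => h1 ⟨m, y.trans' h hm⟩
      rw [G_bot_neg h1, G_bot_neg h2, mk_eq_iff.mpr h]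

lemma du_edge12 {x y : PN n} {u v : Row2 n} (h : x.r u v) :
    (Du x y).r (emb12 u) (emb12 v) :=
  Relation.EqvGen.rel _ _ (Or.inl ⟨u, v, h, rfl, rfl⟩)

lemma du_edge23 {x y : PN n} {u v : Row2 n} (h : y.r u v) :
    (Du x y).r (emb23 u) (emb23 v) :=
  Relation.EqvGen.rel _ _ (Or.inr ⟨u, v, h, rfl, rfl⟩)

lemma du_mid {x y : PN n} {m m' : Fin n} (h : (mid x y).r m m') :
    (Du x y).r (inr (inl m)) (inr (inl m')) := by
  induction h with
  | rel p q hpq =>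
    rcases hpq with hx | hy
    · exact du_edge12 (u := inr p) (v := inr q) hx
    · exact du_edge23 (u := inl p) (v := inl q) hy
  | refl p => exact (Du x y).refl' _
  | symm p q _ ih => exact (Du x y).symm' ih
  | trans p q r _ _ ih1 ih2 => exact (Du x y).trans' ih1 ih2

lemma du_rel_iff {x y : PN n} {z w : Row3 n} :
    (Du x y).r z w ↔ G x y z = G x y w := by
  constructor
  · intro h
    induction h with
    | rel p q hpq =>
      rcases hpq with ⟨u, v, huv, rfl, rfl⟩ | ⟨u, v, huv, rfl, rfl⟩
      · exact G_emb12 huv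
      · exact G_emb23 huv
    | refl p => rfl
    | symm p q _ ih => exact ih.symm
    | trans p q r _ _ ih1 ih2 => exact ih1.trans ih2
  · intro h
    -- helper facts
    match z, w with
    | inl i, inl i' =>
      by_cases h1 : ∃ m, x.r (inl i) (inr m) <;>
        by_cases h2 : ∃ m, x.r (inl i') (inr m)
      · rw [G_top_pos h1.choose_spec, G_top_pos h2.choose_spec] at h
        have hm : (mid x y).r h1.choose h2.choose :=
          Quotient.exact (Sum.inl.inj h)
        have d1 : (Du x y).r (inl i) (inr (inl h1.choose)) :=
          du_edge12 (u := inl i) (v := inr h1.choose) h1.choose_spec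
        have d2 : (Du x y).r (inl i') (inr (inl h2.choose)) :=
          du_edge12 (u := inl i') (v := inr h2.choose) h2.choose_spec
        exact (Du x y).trans' (( Du x y).trans' d1 (du_mid hm)) ((Du x y).symm' d2)
      · rw [G_top_pos h1.choose_spec, G_top_neg h2] at h; exact absurd h (by simp)
      · rw [G_top_neg h1, G_top_pos h2.choose_spec] at h; exact absurd h (by simp)
      · rw [G_top_neg h1, G_top_neg h2] at h
        have := Quotient.exact (Sum.inl.inj (Sum.inr.inj h))
        exact du_edge12 (u := inl i) (v := inl i') this
    | inl i, inr (inl m) =>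
      rw [G_mid] at h
      by_cases h1 : ∃ m, x.r (inl i) (inr m)
      · rw [G_top_pos h1.choose_spec] at h
        have hm : (mid x y).r h1.choose m := Quotient.exact (Sum.inl.inj h)
        exact (Du x y).trans'
          (du_edge12 (u := inl i) (v := inr h1.choose) h1.choose_spec) (du_mid hm)
      · rw [G_top_neg h1] at h; exact absurd h (by simp)
    | inr (inl m), inl i =>
      rw [G_mid] at h
      by_cases h1 : ∃ m, x.r (inl i) (inr m)
      · rw [G_top_pos h1.choose_spec] at h
        have hm : (mid x y).r h1.choose m := Quotient.exact (Sum.inl.inj h.symm)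
        exact (Du x y).symm' ((Du x y).trans'
          (du_edge12 (u := inl i) (v := inr h1.choose) h1.choose_spec) (du_mid hm))
      · rw [G_top_neg h1] at h; exact absurd h (by simp)
    | inl i, inr (inr j) =>
      by_cases h1 : ∃ m, x.r (inl i) (inr m) <;>
        by_cases h2 : ∃ m, y.r (inr j) (inl m)
      · rw [G_top_pos h1.choose_spec, G_bot_pos h2.choose_spec] at h
        have hm : (mid x y).r h1.choose h2.choose := Quotient.exact (Sum.inl.inj h)
        have d1 : (Du x y).r (inl i) (inr (inl h1.choose)) :=
          du_edge12 (u := inl i) (v := inr h1.choose) h1.choose_spec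
        have d2 : (Du x y).r (inr (inr j)) (inr (inl h2.choose)) :=
          du_edge23 (u := inr j) (v := inl h2.choose) h2.choose_spec
        exact (Du x y).trans' ((Du x y).trans' d1 (du_mid hm)) ((Du x y).symm' d2)
      · rw [G_top_pos h1.choose_spec, G_bot_neg h2] at h; exact absurd h (by simp)
      · rw [G_top_neg h1, G_bot_pos h2.choose_spec] at h; exact absurd h (by simp)
      · rw [G_top_neg h1, G_bot_neg h2] at h; exact absurd h (by simp)
    | inr (inr j), inl i =>
      by_cases h1 : ∃ m, x.r (inl i) (inr m) <;>
        by_cases h2 : ∃ m, y.r (inr j) (inl m)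
      · rw [G_top_pos h1.choose_spec, G_bot_pos h2.choose_spec] at h
        have hm : (mid x y).r h1.choose h2.choose := Quotient.exact (Sum.inl.inj h.symm)
        have d1 : (Du x y).r (inl i) (inr (inl h1.choose)) :=
          du_edge12 (u := inl i) (v := inr h1.choose) h1.choose_spec
        have d2 : (Du x y).r (inr (inr j)) (inr (inl h2.choose)) :=
          du_edge23 (u := inr j) (v := inl h2.choose) h2.choose_spec
        exact (Du x y).symm'
          ((Du x y).trans' ((Du x y).trans' d1 (du_mid hm)) ((Du x y).symm' d2))
      · rw [G_top_pos h1.choose_spec, G_bot_neg h2] at h; exact absurd h (by simp)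
      · rw [G_top_neg h1, G_bot_pos h2.choose_spec] at h; exact absurd h (by simp)
      · rw [G_top_neg h1, G_bot_neg h2] at h; exact absurd h (by simp)
    | inr (inl m), inr (inl m') =>
      rw [G_mid, G_mid] at h
      exact du_mid (Quotient.exact (Sum.inl.inj h))
    | inr (inl m), inr (inr j) =>
      rw [G_mid] at h
      by_cases h2 : ∃ m, y.r (inr j) (inl m)
      · rw [G_bot_pos h2.choose_spec] at h
        have hm : (mid x y).r m h2.choose := Quotient.exact (Sum.inl.inj h)
        exact (Du x y).trans' (du_mid hm)
          ((Du x y).symm' (du_edge23 (u := inr j) (v := inl h2.choose) h2.choose_spec))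
      · rw [G_bot_neg h2] at h; exact absurd h (by simp)
    | inr (inr j), inr (inl m) =>
      rw [G_mid] at h
      by_cases h2 : ∃ m, y.r (inr j) (inl m)
      · rw [G_bot_pos h2.choose_spec] at h
        have hm : (mid x y).r m h2.choose := Quotient.exact (Sum.inl.inj h.symm)
        exact (Du x y).symm' ((Du x y).trans' (du_mid hm)
          ((Du x y).symm' (du_edge23 (u := inr j) (v := inl h2.choose) h2.choose_spec)))
      · rw [G_bot_neg h2] at h; exact absurd h (by simp)
    | inr (inr j), inr (inr j') =>
      by_cases h1 : ∃ m, y.r (inr j) (inl m) <;>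
        by_cases h2 : ∃ m, y.r (inr j') (inl m)
      · rw [G_bot_pos h1.choose_spec, G_bot_pos h2.choose_spec] at h
        have hm : (mid x y).r h1.choose h2.choose := Quotient.exact (Sum.inl.inj h)
        have d1 : (Du x y).r (inr (inr j)) (inr (inl h1.choose)) :=
          du_edge23 (u := inr j) (v := inl h1.choose) h1.choose_spec
        have d2 : (Du x y).r (inr (inr j')) (inr (inl h2.choose)) :=
          du_edge23 (u := inr j') (v := inl h2.choose) h2.choose_spec
        exact (Du x y).trans' ((Du x y).trans' d1 (du_mid hm)) ((Du x y).symm' d2)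
      · rw [G_bot_pos h1.choose_spec, G_bot_neg h2] at h; exact absurd h (by simp)
      · rw [G_bot_neg h1, G_bot_pos h2.choose_spec] at h; exact absurd h (by simp)
      · rw [G_bot_neg h1, G_bot_neg h2] at h
        exact du_edge23 (u := inr j) (v := inr j')
          (Quotient.exact (Sum.inr.inj (Sum.inr.inj h)))

end RamifiedPartition
namespace RamifiedPartition

open Sum

variable {n : ℕ}

lemma comp_rel_iff {x y : PN n} {u v : Row2 n} :
    (comp x y).r u v ↔ G x y (emb13 u) = G x y (emb13 v) := by
  rw [show (comp x y).r u v ↔ (Du x y).r (emb13 u) (emb13 v) from Iff.rfl]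
  exact du_rel_iff

/-- The tag map descends to the quotient by `comp x y` and is injective. -/
noncomputable def tagF (x y : PN n) :
    Quotient (comp x y) → Quotient (mid x y) ⊕ (Quotient x ⊕ Quotient y) :=
  Quotient.lift (fun u => G x y (emb13 u)) (fun _ _ h => comp_rel_iff.mp h)

lemma tagF_mk (x y : PN n) (u : Row2 n) :
    tagF x y (Quotient.mk (comp x y) u) = G x y (emb13 u) := rfl

lemma tagF_injective (x y : PN n) : Function.Injective (tagF x y) := by
  intro C C'
  induction C using Quotient.ind
  induction C' using Quotient.ind
  intro h
  exact Quotient.sound (comp_rel_iff.mpr h)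

lemma propNum_comp_le_right (x y : PN n) : propNum (comp x y) ≤ propNum y := by
  have key : ∀ C : Quotient (comp x y), IsPropClass (comp x y) C →
      ∃ m j : Fin n, y.r (inr j) (inl m) ∧
        tagF x y C = Sum.inl (Quotient.mk (mid x y) m) := by
    rintro C ⟨⟨i, hi⟩, ⟨j, hj⟩⟩
    have h1 : tagF x y C = G x y (inl i) := by rw [← hi, tagF_mk]; rfl
    have h2 : tagF x y C = G x y (inr (inr j)) := by rw [← hj, tagF_mk]; rfl
    by_cases hb : ∃ m, y.r (inr j) (inl m)
    · exact ⟨hb.choose, j, hb.choose_spec, by rw [h2, G_bot_pos hb.choose_spec]⟩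
    · exfalso
      rw [G_bot_neg hb] at h2
      by_cases ht : ∃ m, x.r (inl i) (inr m)
      · rw [G_top_pos ht.choose_spec] at h1; rw [h1] at h2; simp at h2
      · rw [G_top_neg ht] at h1; rw [h1] at h2; simp at h2
  choose m j hyr htag using key
  have Finj : Function.Injective
      (fun C : {C : Quotient (comp x y) // IsPropClass (comp x y) C} =>
        (⟨Quotient.mk y (inl (m C.1 C.2)),
          ⟨m C.1 C.2, rfl⟩, ⟨j C.1 C.2, Quotient.sound (hyr C.1 C.2)⟩⟩ :
            {C : Quotient y // IsPropClass y C})) := by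
    rintro ⟨C, hC⟩ ⟨C', hC'⟩ h
    have hyy : y.r (inl (m C hC)) (inl (m C' hC')) :=
      Quotient.exact (congrArg Subtype.val h)
    have : tagF x y C = tagF x y C' := by
      rw [htag C hC, htag C' hC']
      exact congrArg Sum.inl (Quotient.sound (mid_of_y hyy))
    exact Subtype.ext (tagF_injective x y this)
  exact Nat.card_le_card_of_injective _ Finj

lemma propNum_comp_le_left (x y : PN n) : propNum (comp x y) ≤ propNum x := by
  have key : ∀ C : Quotient (comp x y), IsPropClass (comp x y) C →
      ∃ m i : Fin n, x.r (inl i) (inr m) ∧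
        tagF x y C = Sum.inl (Quotient.mk (mid x y) m) := by
    rintro C ⟨⟨i, hi⟩, ⟨j, hj⟩⟩
    have h1 : tagF x y C = G x y (inl i) := by rw [← hi, tagF_mk]; rfl
    have h2 : tagF x y C = G x y (inr (inr j)) := by rw [← hj, tagF_mk]; rfl
    by_cases ht : ∃ m, x.r (inl i) (inr m)
    · exact ⟨ht.choose, i, ht.choose_spec, by rw [h1, G_top_pos ht.choose_spec]⟩
    · exfalso
      rw [G_top_neg ht] at h1
      by_cases hb : ∃ m, y.r (inr j) (inl m)
      · rw [G_bot_pos hb.choose_spec] at h2; rw [h1] at h2; simp at h2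
      · rw [G_bot_neg hb] at h2; rw [h1] at h2; simp at h2
  choose m i hxr htag using key
  have Finj : Function.Injective
      (fun C : {C : Quotient (comp x y) // IsPropClass (comp x y) C} =>
        (⟨Quotient.mk x (inr (m C.1 C.2)),
          ⟨i C.1 C.2, Quotient.sound (hxr C.1 C.2)⟩, ⟨m C.1 C.2, rfl⟩⟩ :
            {C : Quotient x // IsPropClass x C})) := by
    rintro ⟨C, hC⟩ ⟨C', hC'⟩ h
    have hxx : x.r (inr (m C hC)) (inr (m C' hC')) :=
      Quotient.exact (congrArg Subtype.val h)
    have : tagF x y C = tagF x y C' := by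
      rw [htag C hC, htag C' hC']
      exact congrArg Sum.inl (Quotient.sound (mid_of_x hxx))
    exact Subtype.ext (tagF_injective x y this)
  exact Nat.card_le_card_of_injective _ Finj

end RamifiedPartition
namespace RamifiedPartition

open Sum

variable {n : ℕ}

/-- Propagating classes as a subtype. -/
abbrev PropC (a : PN n) := {C : Quotient a // IsPropClass a C}

noncomputable def tp {b : PN n} (P : PropC b) : Fin n := P.2.1.choose

lemma tp_spec {b : PN n} (P : PropC b) : Quotient.mk b (inl (tp P)) = P.1 :=
  P.2.1.choose_spec

noncomputable def bt {b : PN n} (P : PropC b) : Fin n := P.2.2.choose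

lemma bt_spec {b : PN n} (P : PropC b) : Quotient.mk b (inr (bt P)) = P.1 :=
  P.2.2.choose_spec

lemma tp_inj {b : PN n} {P P' : PropC b} (h : tp P = tp P') : P = P' :=
  Subtype.ext (by rw [← tp_spec P, ← tp_spec P', h])

/-- `i` lies in a propagating top class of `a`. -/
def aPropT (a : PN n) (i : Fin n) : Prop :=
  ∃ P : PropC a, P.1 = Quotient.mk a (inl i)

/-- `j` lies in a propagating bottom class of `a`. -/
def aPropB (a : PN n) (j : Fin n) : Prop :=
  ∃ P : PropC a, P.1 = Quotient.mk a (inr j)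

/-- The propagating class of a top element. -/
def Pt {a : PN n} {i : Fin n} (h : aPropT a i) : PropC a :=
  ⟨Quotient.mk a (inl i), h.choose_spec ▸ h.choose.2⟩

lemma Pt_val {a : PN n} {i : Fin n} (h : aPropT a i) :
    (Pt h).1 = Quotient.mk a (inl i) := rfl

lemma eq_Pt {a : PN n} {i : Fin n} {P : PropC a}
    (hP : P.1 = Quotient.mk a (inl i)) (h : aPropT a i) : P = Pt h :=
  Subtype.ext hP

def Qb {a : PN n} {j : Fin n} (h : aPropB a j) : PropC a :=
  ⟨Quotient.mk a (inr j), h.choose_spec ▸ h.choose.2⟩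

lemma Qb_val {a : PN n} {j : Fin n} (h : aPropB a j) :
    (Qb h).1 = Quotient.mk a (inr j) := rfl

lemma eq_Qb {a : PN n} {j : Fin n} {P : PropC a}
    (hP : P.1 = Quotient.mk a (inr j)) (h : aPropB a j) : P = Qb h :=
  Subtype.ext hP

section Construction

variable (a b : PN n) (ι : PropC a → PropC b) (hι : Function.Injective ι)

/-- Tagging function for `c`. -/
noncomputable def fc : Row2 n → Quotient a ⊕ Fin n
  | inl i => Sum.inl (Quotient.mk a (inl i))
  | inr j => if h : ∃ P : PropC a, tp (ι P) = j then Sum.inl h.choose.1 else Sum.inr j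

noncomputable def cP : PN n := Setoid.ker (fc a b ι)

/-- Tagging function for `d`. -/
noncomputable def fd : Row2 n → Fin n ⊕ Quotient a
  | inl i => if h : ∃ P : PropC a, bt (ι P) = i then Sum.inr h.choose.1 else Sum.inl i
  | inr j => Sum.inr (Quotient.mk a (inr j))

noncomputable def dP : PN n := Setoid.ker (fd a b ι)

lemma cP_rel {u v : Row2 n} : (cP a b ι).r u v ↔ fc a b ι u = fc a b ι v := Iff.rfl

lemma dP_rel {u v : Row2 n} : (dP a b ι).r u v ↔ fd a b ι u = fd a b ι v := Iff.rfl

variable {a b ι}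

lemma cTT {i i' : Fin n} :
    (cP a b ι).r (inl i) (inl i') ↔ a.r (inl i) (inl i') := by
  rw [cP_rel]
  show Sum.inl (Quotient.mk a (inl i)) = Sum.inl (Quotient.mk a (inl i')) ↔ _
  rw [Sum.inl.injEq, mk_eq_iff]

lemma cBB {m m' : Fin n} :
    (cP a b ι).r (inr m) (inr m') ↔ m = m' := by
  rw [cP_rel]
  constructor
  · intro h
    simp only [fc] at h
    by_cases h1 : ∃ P : PropC a, tp (ι P) = m <;>
      by_cases h2 : ∃ P : PropC a, tp (ι P) = m'
    · rw [dif_pos h1, dif_pos h2, Sum.inl.injEq] at h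
      have : ι h1.choose = ι h2.choose := congrArg ι (Subtype.ext h)
      rw [← h1.choose_spec, ← h2.choose_spec, this]
    · rw [dif_pos h1, dif_neg h2] at h; exact absurd h (by simp)
    · rw [dif_neg h1, dif_pos h2] at h; exact absurd h (by simp)
    · rw [dif_neg h1, dif_neg h2, Sum.inr.injEq] at h; exact h
  · rintro rfl; rfl

include hι in
lemma cTB {i m : Fin n} :
    (cP a b ι).r (inl i) (inr m) ↔
      ∃ P : PropC a, P.1 = Quotient.mk a (inl i) ∧ tp (ι P) = m := by
  rw [cP_rel]
  show Sum.inl (Quotient.mk a (inl i)) = fc a b ι (inr m) ↔ _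
  by_cases h1 : ∃ P : PropC a, tp (ι P) = m
  · simp only [fc, dif_pos h1, Sum.inl.injEq]
    constructor
    · intro h; exact ⟨h1.choose, h.symm, h1.choose_spec⟩
    · rintro ⟨P, hP1, hP2⟩
      have : ι h1.choose = ι P := tp_inj (h1.choose_spec.trans hP2.symm)
      rw [hι this, hP1]
  · simp only [fc, dif_neg h1]
    constructor
    · intro h; exact absurd h (by simp)
    · rintro ⟨P, _, hP2⟩; exact absurd ⟨P, hP2⟩ h1

lemma dBB {j j' : Fin n} :
    (dP a b ι).r (inr j) (inr j') ↔ a.r (inr j) (inr j') := by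
  rw [dP_rel]
  show Sum.inr (Quotient.mk a (inr j)) = Sum.inr (Quotient.mk a (inr j')) ↔ _
  rw [Sum.inr.injEq, mk_eq_iff]

lemma dTT {m m' : Fin n} :
    (dP a b ι).r (inl m) (inl m') ↔ m = m' := by
  rw [dP_rel]
  constructor
  · intro h
    simp only [fd] at h
    by_cases h1 : ∃ P : PropC a, bt (ι P) = m <;>
      by_cases h2 : ∃ P : PropC a, bt (ι P) = m'
    · rw [dif_pos h1, dif_pos h2, Sum.inr.injEq] at h
      have : ι h1.choose = ι h2.choose := congrArg ι (Subtype.ext h)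
      rw [← h1.choose_spec, ← h2.choose_spec, this]
    · rw [dif_pos h1, dif_neg h2] at h; exact absurd h (by simp)
    · rw [dif_neg h1, dif_pos h2] at h; exact absurd h (by simp)
    · rw [dif_neg h1, dif_neg h2, Sum.inl.injEq] at h; exact h
  · rintro rfl; rfl

include hι in
lemma dBT {j m : Fin n} :
    (dP a b ι).r (inr j) (inl m) ↔
      ∃ P : PropC a, P.1 = Quotient.mk a (inr j) ∧ bt (ι P) = m := by
  rw [dP_rel]
  show Sum.inr (Quotient.mk a (inr j)) = fd a b ι (inl m) ↔ _
  by_cases h1 : ∃ P : PropC a, bt (ι P) = m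
  · simp only [fd, dif_pos h1, Sum.inr.injEq]
    constructor
    · intro h; exact ⟨h1.choose, h.symm, h1.choose_spec⟩
    · rintro ⟨P, hP1, hP2⟩
      have hbt : bt (ι h1.choose) = bt (ι P) := h1.choose_spec.trans hP2.symm
      have : ι h1.choose = ι P := Subtype.ext
        (by rw [← bt_spec (ι h1.choose), ← bt_spec (ι P), hbt])
      rw [hι this, hP1]
  · simp only [fd, dif_neg h1]
    constructor
    · intro h; exact absurd h (by simp)
    · rintro ⟨P, _, hP2⟩; exact absurd ⟨P, hP2⟩ h1

end Construction

end RamifiedPartition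
namespace RamifiedPartition

open Sum

variable {n : ℕ}

section Construction2

variable {a b : PN n} {ι : PropC a → PropC b} (hι : Function.Injective ι)

include hι in
lemma iota_val_iff {P P' : PropC a} : (ι P).1 = (ι P').1 ↔ P.1 = P'.1 := by
  constructor
  · intro h; exact congrArg Subtype.val (hι (Subtype.ext h))
  · intro h; exact congrArg Subtype.val (congrArg ι (Subtype.ext h))

lemma mid1_iff {m m' : Fin n} :
    (mid (cP a b ι) b).r m m' ↔ b.r (inl m) (inl m') := by
  constructor
  · intro h
    induction h with
    | rel p q hpq =>
      rcases hpq with hc | hb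
      · rw [cBB.mp hc]
      · exact hb
    | refl p => exact b.refl' _
    | symm p q _ ih => exact b.symm' ih
    | trans p q r _ _ ih1 ih2 => exact b.trans' ih1 ih2
  · intro h; exact mid_of_y h

include hι in
lemma cex {i : Fin n} :
    (∃ m, (cP a b ι).r (inl i) (inr m)) ↔ aPropT a i := by
  constructor
  · rintro ⟨m, hm⟩
    obtain ⟨P, hP1, _⟩ := (cTB hι).mp hm
    exact ⟨P, hP1⟩
  · intro h
    exact ⟨tp (ι (Pt h)), (cTB hι).mpr ⟨Pt h, rfl, rfl⟩⟩

include hι in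
lemma eTT {i i' : Fin n} :
    (comp (cP a b ι) b).r (inl i) (inl i') ↔ a.r (inl i) (inl i') := by
  rw [comp_rel_iff]
  show G (cP a b ι) b (inl i) = G (cP a b ι) b (inl i') ↔ _
  by_cases h1 : aPropT a i <;> by_cases h2 : aPropT a i'
  · have e1 : (cP a b ι).r (inl i) (inr (tp (ι (Pt h1)))) := (cTB hι).mpr ⟨Pt h1, rfl, rfl⟩
    have e2 : (cP a b ι).r (inl i') (inr (tp (ι (Pt h2)))) := (cTB hι).mpr ⟨Pt h2, rfl, rfl⟩
    rw [G_top_pos e1, G_top_pos e2, Sum.inl.injEq, mk_eq_iff, mid1_iff,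
      ← mk_eq_iff (s := b), tp_spec, tp_spec, iota_val_iff hι, Pt_val, Pt_val, mk_eq_iff]
  · rw [G_top_pos ((cTB hι).mpr ⟨Pt h1, rfl, rfl⟩ :
        (cP a b ι).r (inl i) (inr (tp (ι (Pt h1))))),
      G_top_neg (fun he => h2 ((cex hι).mp he))]
    constructor
    · intro h; exact absurd h (by simp)
    · intro hr; exact absurd (⟨Pt h1, (Pt_val h1).trans (Quotient.sound hr)⟩ :
        aPropT a i') h2
  · rw [G_top_neg (fun he => h1 ((cex hι).mp he)),
      G_top_pos ((cTB hι).mpr ⟨Pt h2, rfl, rfl⟩ :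
        (cP a b ι).r (inl i') (inr (tp (ι (Pt h2)))))]
    constructor
    · intro h; exact absurd h (by simp)
    · intro hr; exact absurd (⟨Pt h2, (Pt_val h2).trans (Quotient.sound (a.symm' hr))⟩ :
        aPropT a i) h1
  · rw [G_top_neg (fun he => h1 ((cex hι).mp he)),
      G_top_neg (fun he => h2 ((cex hι).mp he))]
    simp only [Sum.inr.injEq, Sum.inl.injEq]
    rw [mk_eq_iff, cTT]

include hι in
lemma eTB {i m : Fin n} :
    (comp (cP a b ι) b).r (inl i) (inr m) ↔
      ∃ P : PropC a, P.1 = Quotient.mk a (inl i) ∧ Quotient.mk b (inr m) = (ι P).1 := by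
  rw [comp_rel_iff]
  show G (cP a b ι) b (inl i) = G (cP a b ι) b (inr (inr m)) ↔ _
  by_cases h1 : aPropT a i <;> by_cases h2 : ∃ m2, b.r (inr m) (inl m2)
  · rw [G_top_pos ((cTB hι).mpr ⟨Pt h1, rfl, rfl⟩ :
        (cP a b ι).r (inl i) (inr (tp (ι (Pt h1))))),
      G_bot_pos h2.choose_spec, Sum.inl.injEq, mk_eq_iff, mid1_iff]
    have hch : Quotient.mk b (inl h2.choose) = Quotient.mk b (inr m) :=
      (Quotient.sound h2.choose_spec).symm
    constructor
    · intro h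
      refine ⟨Pt h1, rfl, ?_⟩
      rw [← hch, ← tp_spec (ι (Pt h1))]
      exact (Quotient.sound h).symm
    · rintro ⟨P, hP1, hP2⟩
      rw [eq_Pt hP1 h1] at hP2
      rw [← mk_eq_iff (s := b), tp_spec, hch, hP2]
  · rw [G_top_pos ((cTB hι).mpr ⟨Pt h1, rfl, rfl⟩ :
        (cP a b ι).r (inl i) (inr (tp (ι (Pt h1))))), G_bot_neg h2]
    constructor
    · intro h; exact absurd h (by simp)
    · rintro ⟨P, _, hP2⟩
      obtain ⟨t, ht⟩ := (ι P).2.1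
      exact absurd ⟨t, Quotient.exact (hP2.trans ht.symm)⟩ h2
  · rw [G_top_neg (fun he => h1 ((cex hι).mp he)), G_bot_pos h2.choose_spec]
    constructor
    · intro h; exact absurd h (by simp)
    · rintro ⟨P, hP1, _⟩; exact absurd ⟨P, hP1⟩ h1
  · rw [G_top_neg (fun he => h1 ((cex hι).mp he)), G_bot_neg h2]
    constructor
    · intro h; exact absurd h (by simp)
    · rintro ⟨P, hP1, _⟩; exact absurd ⟨P, hP1⟩ h1

lemma eBB {m m' : Fin n} :
    (comp (cP a b ι) b).r (inr m) (inr m') ↔ b.r (inr m) (inr m') := by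
  rw [comp_rel_iff]
  show G (cP a b ι) b (inr (inr m)) = G (cP a b ι) b (inr (inr m')) ↔ _
  by_cases h1 : ∃ m2, b.r (inr m) (inl m2) <;> by_cases h2 : ∃ m2, b.r (inr m') (inl m2)
  · rw [G_bot_pos h1.choose_spec, G_bot_pos h2.choose_spec, Sum.inl.injEq, mk_eq_iff,
      mid1_iff]
    constructor
    · intro h
      exact b.trans' h1.choose_spec (b.trans' h (b.symm' h2.choose_spec))
    · intro h
      exact b.trans' (b.symm' h1.choose_spec) (b.trans' h h2.choose_spec)
  · rw [G_bot_pos h1.choose_spec, G_bot_neg h2]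
    constructor
    · intro h; exact absurd h (by simp)
    · intro h
      exact absurd ⟨h1.choose, b.trans' (b.symm' h) h1.choose_spec⟩ h2
  · rw [G_bot_neg h1, G_bot_pos h2.choose_spec]
    constructor
    · intro h; exact absurd h (by simp)
    · intro h
      exact absurd ⟨h2.choose, b.trans' h h2.choose_spec⟩ h1
  · rw [G_bot_neg h1, G_bot_neg h2]
    simp only [Sum.inr.injEq]
    rw [mk_eq_iff]

end Construction2

end RamifiedPartition
namespace RamifiedPartition

open Sum

variable {n : ℕ}

section Construction3

variable {a b : PN n} {ι : PropC a → PropC b} (hι : Function.Injective ι)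

include hι in
lemma mid2_iff {m m' : Fin n} :
    (mid (comp (cP a b ι) b) (dP a b ι)).r m m' ↔ b.r (inr m) (inr m') := by
  constructor
  · intro h
    induction h with
    | rel p q hpq =>
      rcases hpq with he | hd
      · exact eBB.mp he
      · rw [dTT.mp hd]
    | refl p => exact b.refl' _
    | symm p q _ ih => exact b.symm' ih
    | trans p q r _ _ ih1 ih2 => exact b.trans' ih1 ih2
  · intro h; exact mid_of_x (eBB.mpr h)

include hι in
lemma eex {i : Fin n} :
    (∃ m, (comp (cP a b ι) b).r (inl i) (inr m)) ↔ aPropT a i := by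
  constructor
  · rintro ⟨m, hm⟩
    obtain ⟨P, hP1, _⟩ := (eTB hι).mp hm
    exact ⟨P, hP1⟩
  · intro h
    exact ⟨bt (ι (Pt h)), (eTB hι).mpr ⟨Pt h, rfl, bt_spec (ι (Pt h))⟩⟩

include hι in
lemma dex {j : Fin n} :
    (∃ m, (dP a b ι).r (inr j) (inl m)) ↔ aPropB a j := by
  constructor
  · rintro ⟨m, hm⟩
    obtain ⟨P, hP1, _⟩ := (dBT hι).mp hm
    exact ⟨P, hP1⟩
  · intro h
    exact ⟨bt (ι (Qb h)), (dBT hι).mpr ⟨Qb h, rfl, rfl⟩⟩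

include hι in
lemma eTB_val {i m : Fin n} (h1 : aPropT a i)
    (hm : (comp (cP a b ι) b).r (inl i) (inr m)) :
    Quotient.mk b (inr m) = (ι (Pt h1)).1 := by
  obtain ⟨P, hP1, hP2⟩ := (eTB hι).mp hm
  rwa [eq_Pt hP1 h1] at hP2

include hι in
lemma dBT_val {j m : Fin n} (h1 : aPropB a j)
    (hm : (dP a b ι).r (inr j) (inl m)) :
    Quotient.mk b (inr m) = (ι (Qb h1)).1 := by
  obtain ⟨P, hP1, hP2⟩ := (dBT hι).mp hm
  rw [eq_Qb hP1 h1] at hP2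
  rw [← hP2, bt_spec]

include hι in
lemma finTT {i i' : Fin n} :
    (comp (comp (cP a b ι) b) (dP a b ι)).r (inl i) (inl i') ↔ a.r (inl i) (inl i') := by
  rw [comp_rel_iff]
  show G (comp (cP a b ι) b) (dP a b ι) (inl i)
      = G (comp (cP a b ι) b) (dP a b ι) (inl i') ↔ _
  by_cases h1 : aPropT a i <;> by_cases h2 : aPropT a i'
  · have he1 := ((eex hι).mpr h1).choose_spec
    have he2 := ((eex hι).mpr h2).choose_spec
    rw [G_top_pos he1, G_top_pos he2, Sum.inl.injEq, mk_eq_iff, mid2_iff hι,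
      ← mk_eq_iff (s := b), eTB_val hι h1 he1, eTB_val hι h2 he2, iota_val_iff hι,
      Pt_val, Pt_val, mk_eq_iff]
  · rw [G_top_pos ((eex hι).mpr h1).choose_spec,
      G_top_neg (fun he => h2 ((eex hι).mp he))]
    constructor
    · intro h; exact absurd h (by simp)
    · intro hr; exact absurd (⟨Pt h1, (Pt_val h1).trans (Quotient.sound hr)⟩ :
        aPropT a i') h2
  · rw [G_top_neg (fun he => h1 ((eex hι).mp he)),
      G_top_pos ((eex hι).mpr h2).choose_spec]
    constructor
    · intro h; exact absurd h (by simp)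
    · intro hr; exact absurd (⟨Pt h2, (Pt_val h2).trans (Quotient.sound (a.symm' hr))⟩ :
        aPropT a i) h1
  · rw [G_top_neg (fun he => h1 ((eex hι).mp he)),
      G_top_neg (fun he => h2 ((eex hι).mp he))]
    simp only [Sum.inr.injEq, Sum.inl.injEq]
    rw [mk_eq_iff, eTT hι]

include hι in
lemma finTB {i j : Fin n} :
    (comp (comp (cP a b ι) b) (dP a b ι)).r (inl i) (inr j) ↔ a.r (inl i) (inr j) := by
  rw [comp_rel_iff]
  show G (comp (cP a b ι) b) (dP a b ι) (inl i)
      = G (comp (cP a b ι) b) (dP a b ι) (inr (inr j)) ↔ _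
  by_cases h1 : aPropT a i <;> by_cases h2 : aPropB a j
  · have he1 := ((eex hι).mpr h1).choose_spec
    have hd2 := ((dex hι).mpr h2).choose_spec
    rw [G_top_pos he1, G_bot_pos hd2, Sum.inl.injEq, mk_eq_iff, mid2_iff hι,
      ← mk_eq_iff (s := b), eTB_val hι h1 he1, dBT_val hι h2 hd2, iota_val_iff hι,
      Pt_val, Qb_val, mk_eq_iff]
  · rw [G_top_pos ((eex hι).mpr h1).choose_spec,
      G_bot_neg (fun hd => h2 ((dex hι).mp hd))]
    constructor
    · intro h; exact absurd h (by simp)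
    · intro hr; exact absurd (⟨⟨Quotient.mk a (inr j),
        ⟨i, Quotient.sound hr⟩, ⟨j, rfl⟩⟩, rfl⟩ : aPropB a j) h2
  · rw [G_top_neg (fun he => h1 ((eex hι).mp he)),
      G_bot_pos ((dex hι).mpr h2).choose_spec]
    constructor
    · intro h; exact absurd h (by simp)
    · intro hr; exact absurd (⟨⟨Quotient.mk a (inl i),
        ⟨i, rfl⟩, ⟨j, (Quotient.sound hr).symm⟩⟩, rfl⟩ : aPropT a i) h1
  · rw [G_top_neg (fun he => h1 ((eex hι).mp he)),
      G_bot_neg (fun hd => h2 ((dex hι).mp hd))]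
    constructor
    · intro h; exact absurd h (by simp)
    · intro hr; exact absurd (⟨⟨Quotient.mk a (inl i),
        ⟨i, rfl⟩, ⟨j, (Quotient.sound hr).symm⟩⟩, rfl⟩ : aPropT a i) h1

include hι in
lemma finBB {j j' : Fin n} :
    (comp (comp (cP a b ι) b) (dP a b ι)).r (inr j) (inr j') ↔ a.r (inr j) (inr j') := by
  rw [comp_rel_iff]
  show G (comp (cP a b ι) b) (dP a b ι) (inr (inr j))
      = G (comp (cP a b ι) b) (dP a b ι) (inr (inr j')) ↔ _
  by_cases h1 : aPropB a j <;> by_cases h2 : aPropB a j'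
  · have hd1 := ((dex hι).mpr h1).choose_spec
    have hd2 := ((dex hι).mpr h2).choose_spec
    rw [G_bot_pos hd1, G_bot_pos hd2, Sum.inl.injEq, mk_eq_iff, mid2_iff hι,
      ← mk_eq_iff (s := b), dBT_val hι h1 hd1, dBT_val hι h2 hd2, iota_val_iff hι,
      Qb_val, Qb_val, mk_eq_iff]
  · rw [G_bot_pos ((dex hι).mpr h1).choose_spec,
      G_bot_neg (fun hd => h2 ((dex hι).mp hd))]
    constructor
    · intro h; exact absurd h (by simp)
    · intro hr; exact absurd (⟨Qb h1, (Qb_val h1).trans (Quotient.sound hr)⟩ :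
        aPropB a j') h2
  · rw [G_bot_neg (fun hd => h1 ((dex hι).mp hd)),
      G_bot_pos ((dex hι).mpr h2).choose_spec]
    constructor
    · intro h; exact absurd h (by simp)
    · intro hr; exact absurd (⟨Qb h2, (Qb_val h2).trans (Quotient.sound (a.symm' hr))⟩ :
        aPropB a j) h1
  · rw [G_bot_neg (fun hd => h1 ((dex hι).mp hd)),
      G_bot_neg (fun hd => h2 ((dex hι).mp hd))]
    simp only [Sum.inr.injEq]
    rw [mk_eq_iff, dBB]

include hι in
lemma final_eq : comp (comp (cP a b ι) b) (dP a b ι) = a := by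
  apply Setoid.ext
  intro u v
  match u, v with
  | inl i, inl i' => exact finTT hι
  | inl i, inr j => exact finTB hι
  | inr j, inl i =>
    constructor
    · intro h
      exact a.symm' ((finTB hι).mp ((comp (comp (cP a b ι) b) (dP a b ι)).symm' h))
    · intro h
      exact (comp (comp (cP a b ι) b) (dP a b ι)).symm' ((finTB hι).mpr (a.symm' h))
  | inr j, inr j' => exact finBB hι

end Construction3

theorem factor_iff_propNum_le' (n : ℕ) (a b : PN n) :
    (∃ c d : PN n, comp (comp c b) d = a) ↔ propNum a ≤ propNum b := by
  constructor
  · rintro ⟨c, d, rfl⟩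
    exact le_trans (propNum_comp_le_left (comp c b) d) (propNum_comp_le_right c b)
  · intro h
    haveI := Fintype.ofFinite (PropC a)
    haveI := Fintype.ofFinite (PropC b)
    simp only [propNum, Nat.card_eq_fintype_card] at h
    obtain ⟨ι⟩ := Function.Embedding.nonempty_of_card_le h
    exact ⟨cP a b ⇑ι, dP a b ⇑ι, final_eq ι.injective⟩

end RamifiedPartition

namespace RamifiedPartition

/-- for `a, b ∈ p_n`, there exist `c, d ∈ p_n` with `c∘b∘d = a`
if and only if `#(a) ≤ #(b)`. -/
theorem factor_iff_propNum_le (n : ℕ) (a b : PN n) :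
    (∃ c d : PN n, comp (comp c b) d = a) ↔ propNum a ≤ propNum b :=
  factor_iff_propNum_le' n a b

end RamifiedPartition
end

section
/- For every n ≥ 1, the determinant of the Gram matrix G_n is a nonzero element of the polynomial ring ℤ[Q₁,Q₂]. -/
attribute [local instance] Classical.propDecidable

namespace RamifiedGram

instance setoidFinite {α : Type*} [Finite α] : Finite (Setoid α) :=
  Finite.of_injective (fun s => s.r) (fun s t h => by cases s; cases t; cases h; rfl)

/-- The 2-ramified partitions of `Fin n`: pairs of equivalence relations
`(a₁, a₂)` with `a₁ ≤ a₂` (`a₁` refines `a₂`). -/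
def RamPart (n : ℕ) : Type := {p : Setoid (Fin n) × Setoid (Fin n) // p.1 ≤ p.2}

noncomputable instance (n : ℕ) : Fintype (RamPart n) := by
  unfold RamPart; exact Fintype.ofFinite _

/-- The Gram matrix `G_n` over `ℤ[Q₁,Q₂]` (with `Q₁ = X 0`, `Q₂ = X 1`):
the `(a,b)` entry is `Q₁^{k(a,b)} Q₂^{h(a,b)}` where `k(a,b)` is the number of
parts of the join `a₂ ∨ b₂` of the coarser components and `h(a,b)` is the
number of parts of the join `a₁ ∨ b₁` of the finer components. -/
noncomputable def gram (n : ℕ) : Matrix (RamPart n) (RamPart n) (MvPolynomial (Fin 2) ℤ) :=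
  fun a b =>
    MvPolynomial.X 0 ^ Nat.card (Quotient (a.1.2 ⊔ b.1.2)) *
    MvPolynomial.X 1 ^ Nat.card (Quotient (a.1.1 ⊔ b.1.1))

end RamifiedGram

/-!
Specialise `Q₁ = Q₂ = n`. The entry `n ^ k(a,b) * n ^ h(a,b)` then counts the pairs of maps
`(φ, ψ) : [n] → [n]` with `a₂ ∨ b₂ ≤ ker φ` and `a₁ ∨ b₁ ≤ ker ψ`, so the specialised Gram matrix
is `W Wᵀ` for the 0/1 matrix `W = gramFactor n` relating a ramified partition `a` to the pairs
with `a₂ ≤ ker φ` and `a₁ ≤ ker ψ`. Restricting `W` to pairs of maps whose kernels are exactly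
`(b₂, b₁)` gives the zeta matrix `[a ≤ b]` of the poset of ramified partitions, which is
unitriangular; hence the rows of `W` are independent and `det (W Wᵀ) ≠ 0` over the ordered
field `ℚ`.
-/

open Matrix

namespace Setoid

variable {α β R : Type*}

theorem ker_out_comp_mk (s : Setoid α) : ker (Quotient.out ∘ Quotient.mk s) = s :=
  Setoid.ext fun _ _ => by
    rw [ker_def, Function.comp_apply, Function.comp_apply, Quotient.out_inj, Quotient.eq]

theorem card_filter_le_ker [Fintype α] [DecidableEq α] [Fintype β] (s : Setoid α) :
    (Finset.univ.filter fun φ : α → β => s ≤ ker φ).card =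
      Fintype.card β ^ Nat.card (Quotient s) := by
  let e : (Quotient s → β) ≃ {φ : α → β // s ≤ ker φ} :=
    { toFun g := ⟨g ∘ Quotient.mk s, fun _ _ h => congrArg g (Quotient.sound h)⟩
      invFun φ := Quotient.lift φ.1 fun _ _ h => φ.2 h
      left_inv g := funext fun x => Quotient.inductionOn x fun _ => rfl
      right_inv _ := rfl }
  rw [← Fintype.card_subtype, ← Fintype.card_congr e, Fintype.card_fun, Nat.card_eq_fintype_card]

noncomputable def kerIndicator (α β R : Type*) [Zero R] [One R] : Matrix (Setoid α) (α → β) R :=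
  fun s φ => if s ≤ ker φ then 1 else 0

theorem kerIndicator_mul_transpose_apply [Fintype α] [DecidableEq α] [Fintype β] [Semiring R]
    (s t : Setoid α) :
    (kerIndicator α β R * (kerIndicator α β R)ᵀ) s t =
      (Fintype.card β : R) ^ Nat.card (Quotient (s ⊔ t)) := by
  simp only [mul_apply, transpose_apply, kerIndicator, ite_zero_mul_ite_zero, mul_one,
    ← sup_le_iff]
  rw [Finset.sum_boole, card_filter_le_ker, Nat.cast_pow]

end Setoid

theorem linearIndependent_of_apply_eq_ite_le {P ι R : Type*} [PartialOrder P] [Finite P]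
    [Ring R] (f : P → ι → R) (c : P → ι) (hf : ∀ a b, f a (c b) = if a ≤ b then 1 else 0) :
    LinearIndependent R f := by
  classical
  cases nonempty_fintype P
  rw [Fintype.linearIndependent_iff]
  intro g hg a
  induction a using WellFoundedLT.induction with
  | ind a ih =>
    have hsum := congrFun hg (c a)
    simp only [Finset.sum_apply, Pi.smul_apply, smul_eq_mul, hf, Pi.zero_apply] at hsum
    rwa [Finset.sum_eq_single a (fun b _ hba => ?_) (by simp), if_pos le_rfl, mul_one] at hsum
    split_ifs with hle
    · rw [ih b (lt_of_le_of_ne hle hba), zero_mul]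
    · rw [mul_zero]

theorem Matrix.det_mul_transpose_ne_zero_of_linearIndependent {m n R : Type*} [Field R]
    [LinearOrder R] [IsStrictOrderedRing R] [Fintype m] [DecidableEq m] [Fintype n]
    {A : Matrix m n R} (hA : LinearIndependent R A.row) : (A * Aᵀ).det ≠ 0 := by
  have hrows : LinearIndependent R (A * Aᵀ).row := by
    rw [linearIndependent_iff_card_eq_finrank_span, Set.finrank, ← rank_eq_finrank_span_row,
      rank_self_mul_transpose, hA.rank_matrix]
  exact ((isUnit_iff_isUnit_det _).1 (linearIndependent_rows_iff_isUnit.1 hrows)).ne_zero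

namespace RamifiedGram

instance (n : ℕ) : PartialOrder (RamPart n) :=
  inferInstanceAs (PartialOrder {p : Setoid (Fin n) × Setoid (Fin n) // p.1 ≤ p.2})

theorem RamPart.le_iff {n : ℕ} {a b : RamPart n} : a ≤ b ↔ a.1.1 ≤ b.1.1 ∧ a.1.2 ≤ b.1.2 :=
  Iff.rfl

noncomputable def gramFactor (n : ℕ) :
    Matrix (RamPart n) ((Fin n → Fin n) × (Fin n → Fin n)) ℚ :=
  fun a p => Setoid.kerIndicator _ _ ℚ a.1.2 p.1 * Setoid.kerIndicator _ _ ℚ a.1.1 p.2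

theorem gramFactor_mul_transpose_apply (n : ℕ) (a b : RamPart n) :
    (gramFactor n * (gramFactor n)ᵀ) a b =
      (n : ℚ) ^ Nat.card (Quotient (a.1.2 ⊔ b.1.2)) *
        (n : ℚ) ^ Nat.card (Quotient (a.1.1 ⊔ b.1.1)) := by
  let K := Setoid.kerIndicator (Fin n) (Fin n) ℚ
  have hsplit :
      (gramFactor n * (gramFactor n)ᵀ) a b = (K * Kᵀ) a.1.2 b.1.2 * (K * Kᵀ) a.1.1 b.1.1 := by
    simp only [mul_apply, transpose_apply, gramFactor]
    rw [Fintype.sum_prod_type, Finset.sum_mul_sum]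
    exact Finset.sum_congr rfl fun _ _ => Finset.sum_congr rfl fun _ _ => by ring
  rw [hsplit, Setoid.kerIndicator_mul_transpose_apply, Setoid.kerIndicator_mul_transpose_apply,
    Fintype.card_fin]

theorem gram_map_aeval_eq (n : ℕ) :
    (gram n).map (MvPolynomial.aeval fun _ => (n : ℚ)) = gramFactor n * (gramFactor n)ᵀ := by
  ext a b
  simp [gram, gramFactor_mul_transpose_apply]

theorem linearIndependent_gramFactor (n : ℕ) : LinearIndependent ℚ (gramFactor n).row := by
  refine linearIndependent_of_apply_eq_ite_le _
    (fun b => (Quotient.out ∘ Quotient.mk b.1.2, Quotient.out ∘ Quotient.mk b.1.1)) ?_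
  intro a b
  simp only [row, gramFactor, Setoid.kerIndicator, Setoid.ker_out_comp_mk, RamPart.le_iff,
    ite_zero_mul_ite_zero, mul_one, and_comm]

theorem gram_det_ne_zero_general (n : ℕ) : (gram n).det ≠ 0 := by
  intro h
  refine det_mul_transpose_ne_zero_of_linearIndependent (A := gramFactor n)
    (linearIndependent_gramFactor n) ?_
  rw [← gram_map_aeval_eq, ← AlgHom.mapMatrix_apply, ← AlgHom.map_det, h, map_zero]

/-- for every `n ≥ 1`, `det G_n` is a nonzero element of
`ℤ[Q₁,Q₂]`. -/
theorem gram_det_ne_zero (n : ℕ) (hn : 1 ≤ n) : (gram n).det ≠ 0 :=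
  gram_det_ne_zero_general n

end RamifiedGram
end

section
/- The Gram matrix G_2 (a 3 × 3 matrix, since a 2-element set has exactly three 2-ramified partitions) has determinant det G_2 = Q₁³ Q₂⁴ (Q₁ − 1)(Q₂ − 1) in ℤ[Q₁,Q₂]. -/
attribute [local instance] Classical.propDecidable

/-! On a two-element set every equivalence relation is either equality or total, so the
2-ramified partitions are `(⊥, ⊥)`, `(⊥, ⊤)`, `(⊤, ⊤)`; all joins are again `⊥` or `⊤`, with
two and one classes respectively, and `G₂` becomes an explicit `3 × 3` matrix of monomials. -/

namespace Setoid

variable {α : Type*}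

instance [Nontrivial α] : Nontrivial (Setoid α) := by
  obtain ⟨x, y, hxy⟩ := exists_pair_ne α
  refine ⟨⊥, ⊤, fun h => hxy ?_⟩
  simpa using Setoid.eq_top_iff.mp h x y

theorem card_quotient_bot : Nat.card (Quotient (⊥ : Setoid α)) = Nat.card α :=
  Nat.card_congr quotientBotEquiv

theorem eq_bot_or_eq_top_of_fin_two (s : Setoid (Fin 2)) : s = ⊥ ∨ s = ⊤ := by
  by_cases h01 : s 0 1
  · right
    refine Setoid.eq_top_iff.mpr fun x y => ?_
    fin_cases x <;> fin_cases y
    exacts [s.refl _, h01, s.symm h01, s.refl _]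
  · left
    refine le_bot_iff.mp fun x y hxy => ?_
    fin_cases x <;> fin_cases y
    exacts [rfl, (h01 hxy).elim, (h01 (s.symm hxy)).elim, rfl]

end Setoid

namespace RamifiedGram

open MvPolynomial Setoid

noncomputable def finThreeEquivRamPartTwo : Fin 3 ≃ RamPart 2 where
  toFun := ![⟨(⊥, ⊥), le_rfl⟩, ⟨(⊥, ⊤), bot_le⟩, ⟨(⊤, ⊤), le_rfl⟩]
  invFun p := if p.1.1 = ⊤ then 2 else if p.1.2 = ⊤ then 1 else 0
  left_inv i := by fin_cases i <;> simp
  right_inv := by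
    rintro ⟨⟨a₁, a₂⟩, hle⟩
    rcases eq_bot_or_eq_top_of_fin_two a₁ with rfl | rfl <;>
      rcases eq_bot_or_eq_top_of_fin_two a₂ with rfl | rfl
    case inr.inl => exact (bot_ne_top (top_le_iff.mp hle)).elim
    all_goals simp [RamPart]

theorem gram_two_submatrix :
    (gram 2).submatrix finThreeEquivRamPartTwo finThreeEquivRamPartTwo =
      !![X 0 ^ 2 * X 1 ^ 2, X 0 * X 1 ^ 2, X 0 * X 1;
         X 0 * X 1 ^ 2, X 0 * X 1 ^ 2, X 0 * X 1;
         X 0 * X 1, X 0 * X 1, X 0 * X 1] := by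
  ext i j : 1
  fin_cases i <;> fin_cases j <;>
    simp [finThreeEquivRamPartTwo, gram, card_quotient_bot,
      Nat.card_fin, -Nat.card_eq_fintype_card]

/-- a 2-element set has exactly three 2-ramified partitions, and
`det G_2 = Q₁³ Q₂⁴ (Q₁ − 1)(Q₂ − 1)` in `ℤ[Q₁,Q₂]`. -/
theorem gram_two_det :
    Nat.card (RamPart 2) = 3 ∧
    (gram 2).det =
      X 0 ^ 3 * X 1 ^ 4 * (X 0 - 1) * (X 1 - 1) := by
  refine ⟨by rw [← Nat.card_congr finThreeEquivRamPartTwo, Nat.card_fin], ?_⟩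
  rw [← Matrix.det_submatrix_equiv_self finThreeEquivRamPartTwo, gram_two_submatrix,
    Matrix.det_fin_three]
  simp only [Matrix.of_apply, Matrix.cons_val', Matrix.cons_val_zero, Matrix.cons_val_fin_one,
    Matrix.cons_val_one, Matrix.cons_val, add_sub_cancel_right]
  ring

end RamifiedGram
end

section
/- For every real number C, there exists m ∈ ℕ such that for all n > m, the number of 2-ramified partitions of an n-element set exceeds C^n. -/
open Filter Nat

noncomputable def matchFun (n k : ℕ) (σ : Equiv.Perm (Fin k)) : Fin n → Fin k ⊕ ℕ :=
  fun i => if h1 : i.val < k then Sum.inl ⟨i.val, h1⟩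
    else if h2 : i.val < 2*k then Sum.inl (σ.symm ⟨i.val - k, by omega⟩)
    else Sum.inr i.val

lemma matchFun_inj (n k : ℕ) (hn : 2*k ≤ n) :
    Function.Injective (fun σ : Equiv.Perm (Fin k) => Setoid.ker (matchFun n k σ)) := by
  intro σ τ heq
  ext i
  have hi : (i : ℕ) < k := i.isLt
  set a : Fin n := ⟨i, by omega⟩
  have hσi : ((σ i : ℕ)) < k := (σ i).isLt
  set b : Fin n := ⟨k + σ i, by omega⟩
  have ha : ∀ ρ : Equiv.Perm (Fin k), matchFun n k ρ a = Sum.inl i := by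
    intro ρ; simp [matchFun, a, hi]
  have hb : ∀ ρ : Equiv.Perm (Fin k), matchFun n k ρ b = Sum.inl (ρ.symm (σ i)) := by
    intro ρ
    have hbv : (b : ℕ) = k + (σ i : ℕ) := rfl
    simp only [matchFun, hbv]
    rw [dif_neg (by omega), dif_pos (by omega)]
    simp [Fin.ext_iff]
  have hrel : Setoid.ker (matchFun n k σ) a b := by
    show matchFun n k σ a = matchFun n k σ b
    rw [ha, hb]
    simp
  have heq' : Setoid.ker (matchFun n k σ) = Setoid.ker (matchFun n k τ) := heq
  rw [heq'] at hrel
  have : matchFun n k τ a = matchFun n k τ b := hrel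
  rw [ha, hb] at this
  have := Sum.inl.inj this
  have h2 := congrArg τ this
  simp only [Equiv.apply_symm_apply] at h2
  exact congrArg Fin.val h2.symm

lemma card_ge (n k : ℕ) (hn : 2*k ≤ n) :
    k ! ≤ Nat.card {p : Setoid (Fin n) × Setoid (Fin n) // p.1 ≤ p.2} := by
  have hinj : Function.Injective
      (fun σ : Equiv.Perm (Fin k) =>
        (⟨(Setoid.ker (matchFun n k σ), ⊤), le_top⟩ :
          {p : Setoid (Fin n) × Setoid (Fin n) // p.1 ≤ p.2})) := by
    intro σ τ h
    apply matchFun_inj n k hn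
    have := congrArg (fun x => x.1.1) h
    exact this
  have hfin : Finite (Setoid (Fin n)) :=
    Finite.of_injective (fun s : Setoid (Fin n) => s.r)
      (fun s t h => by cases s; cases t; congr)
  have : Finite {p : Setoid (Fin n) × Setoid (Fin n) // p.1 ≤ p.2} :=
    Subtype.finite
  calc k ! = Nat.card (Equiv.Perm (Fin k)) := by
        simp [Nat.card_eq_fintype_card, Fintype.card_perm]
    _ ≤ _ := Nat.card_le_card_of_injective _ hinj

/-- for every real `C` there is `m ∈ ℕ` such that for all
`n > m` the number of 2-ramified partitions of an `n`-element set (pairs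
`(a₁,a₂)` of equivalence relations on it with `a₁ ≤ a₂`, i.e. `a₁` refining
`a₂`) exceeds `C^n`. -/
theorem card_ramified_gt_pow (C : ℝ) :
    ∃ m : ℕ, ∀ n : ℕ, n > m →
      C ^ n <
        (Nat.card {p : Setoid (Fin n) × Setoid (Fin n) // p.1 ≤ p.2} : ℝ) := by
  set D := max 1 |C| with hDdef
  have hD1 : (1:ℝ) ≤ D := le_max_left _ _
  have hD0 : (0:ℝ) < D := lt_of_lt_of_le one_pos hD1
  have h0 : Tendsto (fun k : ℕ => (D^2)^k / k !) atTop (nhds 0) :=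
    FloorSemiring.tendsto_pow_div_factorial_atTop _
  have hev : ∀ᶠ k in atTop, (D^2)^k / k ! < 1/D :=
    h0.eventually (gt_mem_nhds (by positivity))
  obtain ⟨m, hm⟩ := eventually_atTop.mp hev
  refine ⟨2*m + 2, fun n hn => ?_⟩
  set k := n / 2 with hk
  have hkn : 2*k ≤ n := by omega
  have hkm : m ≤ k := by omega
  have h1 : C ^ n ≤ D ^ n := by
    calc C ^ n ≤ |C ^ n| := le_abs_self _
      _ = |C| ^ n := by rw [abs_pow]
      _ ≤ D ^ n := pow_le_pow_left₀ (abs_nonneg _) (le_max_right _ _) n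
  have h2 : D ^ n ≤ D ^ (2*k+1) := pow_le_pow_right₀ hD1 (by omega)
  have h3 : D ^ (2*k+1) < (k ! : ℝ) := by
    have hlt := hm k hkm
    have hfac : (0:ℝ) < (k ! : ℝ) := by positivity
    rw [div_lt_div_iff₀ hfac hD0, one_mul] at hlt
    calc D ^ (2*k+1) = (D^2)^k * D := by rw [pow_succ, pow_mul]
      _ < _ := hlt
  have h4 : (k ! : ℝ) ≤
      (Nat.card {p : Setoid (Fin n) × Setoid (Fin n) // p.1 ≤ p.2} : ℝ) := by
    exact_mod_cast card_ge n k hkn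
  linarith
end

section
/- For all positive integers Q₁ and Q₂ there exists m ∈ ℕ such that for every n > m, the complex ramified partition algebra P_n^{(2)}(Q₁, Q₂) is not a semisimple ring. -/
attribute [local instance] Classical.propDecidable

namespace RamifiedPartition

/-- `p_n^{(2)}`: the 2-ramified partitions of `[n] ⊔ [n]′`, i.e. pairs
`(a₁,a₂)` of partitions with `a₁ ≤ a₂` (`a₁` refines `a₂`). -/
def RPn (n : ℕ) : Type := {p : PN n × PN n // p.1 ≤ p.2}

/-- `A` is a realization of the ramified partition algebra `P_n^{(2)}(Q₁,Q₂)`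
over `ℂ`: it has a `ℂ`-basis indexed by `p_n^{(2)}` on which multiplication is
given by `a·b = Q₁^{c(a₁,b₁)} Q₂^{c(a₂,b₂)} (a₁∘b₁, a₂∘b₂)`, and the basis
element at the identity pair is the unit. -/
def IsRamifiedPartitionAlgebra (n : ℕ) (Q₁ Q₂ : ℂ) (A : Type*) [Ring A]
    [Algebra ℂ A] (basis : Module.Basis (RPn n) ℂ A) : Prop :=
  (∀ a b c : RPn n,
      c.1 = (comp a.1.1 b.1.1, comp a.1.2 b.1.2) →
      (basis a : A) * basis b =
        (Q₁ ^ cnum a.1.1 b.1.1 * Q₂ ^ cnum a.1.2 b.1.2) • basis c) ∧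
  basis ⟨(oneP n, oneP n), le_refl _⟩ = 1

end RamifiedPartition


namespace RamifiedPartition

variable {n : ℕ}

/-- The equality setoid. -/
def eqS (α : Type*) : Setoid α := ⟨Eq, eq_equivalence⟩

@[simp] lemma eqS_rel {α : Type*} (a b : α) : eqS α a b ↔ a = b := Iff.rfl

/-- Disjoint sum of two setoids. -/
def sumS {α β : Type*} (s : Setoid α) (t : Setoid β) : Setoid (α ⊕ β) where
  r x y := match x, y with
    | .inl a, .inl b => s a b
    | .inr a, .inr b => t a b
    | _, _ => False
  iseqv := by
    constructor
    · rintro (a | a)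
      · exact s.refl a
      · exact t.refl a
    · rintro (a | a) (b | b) h
      · exact s.symm h
      · exact h.elim
      · exact h.elim
      · exact t.symm h
    · rintro (a | a) (b | b) (c | c) h₁ h₂ <;> first
        | exact s.trans h₁ h₂
        | exact t.trans h₁ h₂
        | exact h₁.elim
        | exact h₂.elim

@[simp] lemma sumS_inl_inl {α β : Type*} (s : Setoid α) (t : Setoid β) (a b : α) :
    sumS s t (Sum.inl a) (Sum.inl b) ↔ s a b := Iff.rfl

@[simp] lemma sumS_inr_inr {α β : Type*} (s : Setoid α) (t : Setoid β) (a b : β) :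
    sumS s t (Sum.inr a) (Sum.inr b) ↔ t a b := Iff.rfl

@[simp] lemma sumS_inl_inr {α β : Type*} (s : Setoid α) (t : Setoid β) (a : α) (b : β) :
    sumS s t (Sum.inl a) (Sum.inr b) ↔ False := Iff.rfl

@[simp] lemma sumS_inr_inl {α β : Type*} (s : Setoid α) (t : Setoid β) (a : β) (b : α) :
    sumS s t (Sum.inr a) (Sum.inl b) ↔ False := Iff.rfl

lemma emb23_eq (u : Row2 n) : (emb23 u : Row3 n) = Sum.inr u := by cases u <;> rfl

lemma du_gen12 (a b : PN n) {u v : Row2 n} (h : a u v) :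
    Du a b (emb12 u) (emb12 v) :=
  Relation.EqvGen.rel _ _ (Or.inl ⟨u, v, h, rfl, rfl⟩)

lemma du_gen23 (a b : PN n) {u v : Row2 n} (h : b u v) :
    Du a b (emb23 u) (emb23 v) :=
  Relation.EqvGen.rel _ _ (Or.inr ⟨u, v, h, rfl, rfl⟩)

lemma du_eq (a b : PN n) (s : Setoid (Row3 n))
    (h1 : ∀ u v, a u v → s (emb12 u) (emb12 v))
    (h2 : ∀ u v, b u v → s (emb23 u) (emb23 v))
    (h3 : s ≤ Du a b) : Du a b = s := by
  refine le_antisymm (Setoid.eqvGen_le ?_) h3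
  rintro x y (⟨u, v, huv, rfl, rfl⟩ | ⟨u, v, huv, rfl, rfl⟩)
  · exact h1 u v huv
  · exact h2 u v huv


/-- The top-row partition element: `π` on the top row, singletons on the bottom row. -/
def topS (π : Setoid (Fin n)) : PN n := sumS π (eqS (Fin n))

lemma du_top (π : Setoid (Fin n)) (y : PN n) :
    Du (topS π) y = sumS π y := by
  refine du_eq _ _ _ ?_ ?_ ?_
  · rintro (i | i) (j | j) h
    · exact h
    · exact h.elim
    · exact h.elim
    · exact (eqS_rel i j).mp h ▸ (sumS π y).refl _
  · intro u v h
    rw [emb23_eq, emb23_eq]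
    exact h
  · rintro (i | u) (j | v) h
    · exact du_gen12 (topS π) y (u := Sum.inl i) (v := Sum.inl j) h
    · exact h.elim
    · exact h.elim
    · have := du_gen23 (topS π) y (u := u) (v := v) h
      rwa [emb23_eq, emb23_eq] at this

lemma comp_top (π : Setoid (Fin n)) (y : PN n) :
    comp (topS π) y = sumS π (Setoid.comap Sum.inr y) := by
  unfold comp
  rw [du_top]
  apply Setoid.ext
  rintro (i | i) (j | j) <;> exact Iff.rfl

lemma du_tb (π β σ : Setoid (Fin n)) :
    Du (sumS π β) (topS σ) = sumS π (sumS (β ⊔ σ) (eqS (Fin n))) := by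
  refine du_eq _ _ _ ?_ ?_ ?_
  · rintro (i | i) (j | j) h
    · exact h
    · exact h.elim
    · exact h.elim
    · exact le_sup_left (a := β) (b := σ) h
  · rintro (i | i) (j | j) h
    · exact le_sup_right (a := β) (b := σ) h
    · exact h.elim
    · exact h.elim
    · exact (eqS_rel i j).mp h ▸ (sumS π (sumS (β ⊔ σ) (eqS (Fin n)))).refl _
  · rintro (i | u) (j | v) h
    · exact du_gen12 _ _ (u := Sum.inl i) (v := Sum.inl j) h
    · exact h.elim
    · exact h.elim
    · rcases u with i | i <;> rcases v with j | j
      · have hmem : (β ⊔ σ) ≤ Setoid.comap (fun i => (Sum.inr (Sum.inl i) : Row3 n))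
            (Du (sumS π β) (topS σ)) := by
          refine sup_le ?_ ?_
          · intro i j hij
            exact du_gen12 _ _ (u := Sum.inr i) (v := Sum.inr j) hij
          · intro i j hij
            exact du_gen23 _ _ (u := Sum.inl i) (v := Sum.inl j) hij
        exact hmem h
      · exact h.elim
      · exact h.elim
      · exact (eqS_rel i j).mp h ▸ (Du (sumS π β) (topS σ)).refl _

lemma comp_tb (π β σ : Setoid (Fin n)) :
    comp (sumS π β) (topS σ) = topS π := by
  unfold comp
  rw [du_tb]
  apply Setoid.ext
  rintro (i | i) (j | j) <;> exact Iff.rfl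

lemma comp_mono {a a' b b' : PN n} (ha : a ≤ a') (hb : b ≤ b') :
    comp a b ≤ comp a' b' := by
  intro x y h
  refine Relation.EqvGen.mono ?_ _ _ (show Relation.EqvGen _ (emb13 x) (emb13 y) from h)
  rintro p q (⟨u, v, huv, rfl, rfl⟩ | ⟨u, v, huv, rfl, rfl⟩)
  · exact Or.inl ⟨u, v, ha huv, rfl, rfl⟩
  · exact Or.inr ⟨u, v, hb huv, rfl, rfl⟩

lemma comp_left_top_rel (b : PN n) (i j : Fin n) :
    comp (⊤ : PN n) b (Sum.inl i) (Sum.inl j) :=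
  du_gen12 ⊤ b (u := Sum.inl i) (v := Sum.inl j) trivial

lemma comp_right_top_rel (a : PN n) (i j : Fin n) :
    comp a (⊤ : PN n) (Sum.inr i) (Sum.inr j) :=
  du_gen23 a ⊤ (u := Sum.inr i) (v := Sum.inr j) trivial

lemma comp_keeps_top {a : PN n} (b : PN n) {i j : Fin n}
    (h : a (Sum.inl i) (Sum.inl j)) :
    comp a b (Sum.inl i) (Sum.inl j) :=
  du_gen12 a b (u := Sum.inl i) (v := Sum.inl j) h

lemma topS_le_Omega (π : Setoid (Fin n)) (y₂ : PN n) :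
    topS π ≤ comp (comp (⊤ : PN n) y₂) (⊤ : PN n) := by
  rintro (i | i) (j | j) h
  · exact comp_keeps_top _ (comp_left_top_rel y₂ i j)
  · exact h.elim
  · exact h.elim
  · exact comp_right_top_rel _ i j


lemma card_mid {γ δ : Type*} (d : Setoid γ) (yy : Setoid δ) (g : δ → γ)
    (hg : ∀ u v, d (g u) (g v) ↔ yy u v)
    (hcl : ∀ u x, d (g u) x → ∃ v, x = g v)
    (p : γ → Prop) (hpg : ∀ x, p x → ∃ u, x = g u) :
    Nat.card {C : Quotient d // ∀ x, Quotient.mk d x = C → p x}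
      = Nat.card {C : Quotient yy // ∀ u, Quotient.mk yy u = C → p (g u)} := by
  refine (Nat.card_congr (Equiv.ofBijective ?_ ⟨?_, ?_⟩)).symm
  · refine fun C => ⟨Quotient.lift (fun u => Quotient.mk d (g u))
      (fun u v h => Quotient.sound ((hg u v).mpr h)) C.1, ?_⟩
    obtain ⟨C, hC⟩ := C
    induction C using Quotient.inductionOn with
    | h u =>
      intro x hx
      have hrel : d x (g u) := Quotient.eq.mp hx
      obtain ⟨v, rfl⟩ := hcl u x (d.symm hrel)
      have : yy v u := (hg v u).mp hrel
      exact hC v (Quotient.sound this)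
  · rintro ⟨C, hC⟩ ⟨C', hC'⟩ hCC
    have := Subtype.mk_eq_mk.mp hCC
    refine Subtype.ext ?_
    induction C using Quotient.inductionOn with
    | h u =>
      induction C' using Quotient.inductionOn with
      | h v =>
        simp only [Quotient.lift_mk] at this
        exact Quotient.sound ((hg u v).mp (Quotient.eq.mp this))
  · rintro ⟨C, hC⟩
    induction C using Quotient.inductionOn with
    | h x =>
      obtain ⟨u, rfl⟩ := hpg x (hC x rfl)
      refine ⟨⟨Quotient.mk yy u, ?_⟩, ?_⟩
      · intro v hv
        have : yy v u := Quotient.eq.mp hv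
        exact hC (g v) (Quotient.sound ((hg v u).mpr this))
      · exact Subtype.ext rfl

/-- The number of classes of `y` contained in the top row. -/
noncomputable def tval (y : PN n) : ℕ :=
  Nat.card {C : Quotient y // ∀ u, Quotient.mk y u = C →
    ∃ i : Fin n, Sum.inr u = (Sum.inr (Sum.inl i) : Row3 n)}

lemma cnum_top (π : Setoid (Fin n)) (y : PN n) : cnum (topS π) y = tval y := by
  unfold cnum tval
  rw [du_top]
  refine card_mid (sumS π y) y Sum.inr ?_ ?_ _ ?_
  · intro u v; exact Iff.rfl
  · rintro u (x | x) h
    · exact h.elim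
    · exact ⟨x, rfl⟩
  · rintro (x | x) ⟨i, hx⟩
    · exact (Sum.inl_ne_inr hx).elim
    · exact ⟨x, rfl⟩

lemma cnum_tb (π β σ : Setoid (Fin n)) :
    cnum (sumS π β) (topS σ) = Nat.card (Quotient (β ⊔ σ)) := by
  unfold cnum
  rw [du_tb]
  have h := card_mid (sumS π (sumS (β ⊔ σ) (eqS (Fin n)))) (β ⊔ σ)
      (fun i => Sum.inr (Sum.inl i))
      (fun u v => Iff.rfl)
      (by
        rintro u (x | (x | x)) h
        · exact h.elim
        · exact ⟨x, rfl⟩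
        · exact h.elim)
      (fun x => ∃ i : Fin n, x = Sum.inr (Sum.inl i))
      (fun x hx => by obtain ⟨i, rfl⟩ := hx; exact ⟨i, rfl⟩)
  rw [h]
  exact Nat.card_congr (Equiv.subtypeUnivEquiv (fun C u _ => ⟨u, rfl⟩))


instance {α : Type*} [Finite α] : Finite (Setoid α) :=
  Finite.of_injective (fun s : Setoid α => s.r)
    (fun s t h => Setoid.ext (fun {x y} => iff_of_eq (congrFun (congrFun h x) y)))

noncomputable instance setoidFintype {α : Type*} [Finite α] : Fintype (Setoid α) :=
  Fintype.ofFinite _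

/-- Functions whose kernel is coarser than `s` correspond to functions on the quotient. -/
def liftEquiv {α β : Type*} (s : Setoid α) :
    {f : α → β // s ≤ Setoid.ker f} ≃ (Quotient s → β) where
  toFun fh := Quotient.lift fh.1 (fun a b h => fh.2 h)
  invFun g := ⟨fun i => g (Quotient.mk s i), fun a b h => Setoid.ker_def.mpr
    (congrArg g (Quotient.sound h))⟩
  left_inv fh := Subtype.ext rfl
  right_inv g := funext (fun C => Quotient.inductionOn C (fun a => rfl))

lemma card_quot_pow (Q : ℕ) (s : Setoid (Fin n)) :
    ((Q : ℂ)) ^ (Nat.card (Quotient s)) =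
      ∑ f : Fin n → Fin Q, (if s ≤ Setoid.ker f then (1 : ℂ) else 0) := by
  haveI : Fintype (Quotient s) := Fintype.ofFinite _
  rw [Finset.sum_boole]
  rw [← Fintype.card_subtype]
  rw [Fintype.card_congr (liftEquiv (β := Fin Q) s)]
  rw [Fintype.card_fun, Fintype.card_fin, Nat.card_eq_fintype_card]
  push_cast
  rfl

lemma exists_coeffs (Q : ℕ) (hQ : Q < n) :
    ∃ c : Setoid (Fin n) → ℂ, c ≠ 0 ∧
      ∀ f : Fin n → Fin Q, ∑ ρ : Setoid (Fin n), (if ρ ≤ Setoid.ker f then c ρ else 0) = 0 := by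
  set K := {κ : Setoid (Fin n) // ∃ f : Fin n → Fin Q, κ = Setoid.ker f} with hK
  let L : (Setoid (Fin n) → ℂ) →ₗ[ℂ] (K → ℂ) :=
    { toFun := fun c κ => ∑ ρ : Setoid (Fin n), (if ρ ≤ κ.1 then c ρ else 0)
      map_add' := by
        intro c d
        funext κ
        rw [Pi.add_apply, ← Finset.sum_add_distrib]
        refine Finset.sum_congr rfl (fun ρ _ => ?_)
        by_cases h : ρ ≤ κ.1 <;> simp [h]
      map_smul' := by
        intro m c
        funext κ
        simp only [RingHom.id_apply, Pi.smul_apply, smul_eq_mul, Finset.mul_sum]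
        refine Finset.sum_congr rfl (fun ρ _ => ?_)
        by_cases h : ρ ≤ κ.1 <;> simp [h] }
  have hcard : Fintype.card K < Fintype.card (Setoid (Fin n)) := by
    refine Fintype.card_subtype_lt (x := eqS (Fin n)) ?_
    rintro ⟨f, hf⟩
    have hinj : Function.Injective f := by
      intro i j hij
      have : Setoid.ker f i j := Setoid.ker_def.mpr hij
      rw [← hf] at this
      exact this
    have := Fintype.card_le_of_injective f hinj
    simp only [Fintype.card_fin] at this
    omega
  have hnoinj : ¬ Function.Injective L := by
    intro hinj
    have := LinearMap.finrank_le_finrank_of_injective hinj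
    rw [Module.finrank_fintype_fun_eq_card, Module.finrank_fintype_fun_eq_card] at this
    omega
  rw [injective_iff_map_eq_zero] at hnoinj
  push_neg at hnoinj
  obtain ⟨c, hc0, hcne⟩ := hnoinj
  refine ⟨c, hcne, fun f => ?_⟩
  have := congrFun hc0 ⟨Setoid.ker f, ⟨f, rfl⟩⟩
  exact this

lemma key_sum (Q : ℕ) (c : Setoid (Fin n) → ℂ)
    (hc : ∀ f : Fin n → Fin Q, ∑ ρ : Setoid (Fin n), (if ρ ≤ Setoid.ker f then c ρ else 0) = 0)
    (β : Setoid (Fin n)) :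
    ∑ σ : Setoid (Fin n), c σ * ((Q : ℂ)) ^ (Nat.card (Quotient (β ⊔ σ))) = 0 := by
  calc ∑ σ : Setoid (Fin n), c σ * ((Q : ℂ)) ^ (Nat.card (Quotient (β ⊔ σ)))
      = ∑ σ : Setoid (Fin n), ∑ f : Fin n → Fin Q,
          (if β ⊔ σ ≤ Setoid.ker f then c σ else 0) := by
        refine Finset.sum_congr rfl (fun σ _ => ?_)
        rw [card_quot_pow, Finset.mul_sum]
        refine Finset.sum_congr rfl (fun f _ => ?_)
        by_cases h : β ⊔ σ ≤ Setoid.ker f <;> simp [h]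
    _ = ∑ f : Fin n → Fin Q, ∑ σ : Setoid (Fin n),
          (if β ⊔ σ ≤ Setoid.ker f then c σ else 0) := Finset.sum_comm
    _ = 0 := by
        refine Finset.sum_eq_zero (fun f _ => ?_)
        by_cases hβ : β ≤ Setoid.ker f
        · have hcong : ∀ σ : Setoid (Fin n), (if β ⊔ σ ≤ Setoid.ker f then c σ else 0)
              = (if σ ≤ Setoid.ker f then c σ else 0) := fun σ => by
            simp only [sup_le_iff, hβ, true_and]
          rw [Finset.sum_congr rfl (fun σ _ => hcong σ)]
          exact hc f
        · refine Finset.sum_eq_zero (fun σ _ => ?_)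
          simp [sup_le_iff, hβ]


end RamifiedPartition

namespace RamifiedPartition

/-- for all positive integers `Q₁, Q₂` there exists `m` such that
for every `n > m` the complex ramified partition algebra `P_n^{(2)}(Q₁,Q₂)`
(i.e. any `ℂ`-algebra with basis `p_n^{(2)}` realizing its multiplication rule)
is not a semisimple ring. -/
theorem ramifiedPartitionAlgebra_not_semisimple (Q₁ Q₂ : ℕ) (h₁ : 0 < Q₁) (h₂ : 0 < Q₂) :
    ∃ m : ℕ, ∀ n : ℕ, n > m →
      ∀ (A : Type) (_ : Ring A) (_ : Algebra ℂ A) (basis : Module.Basis (RPn n) ℂ A),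
        IsRamifiedPartitionAlgebra n (Q₁ : ℂ) (Q₂ : ℂ) A basis →
        ¬ IsSemisimpleRing A := by
  refine ⟨Q₁, fun n hn A _ _ basis hA hss => ?_⟩
  obtain ⟨c, hc0, hcf⟩ := exists_coeffs (n := n) Q₁ hn
  let ram : Setoid (Fin n) → RPn n := fun ρ => ⟨(topS ρ, ⊤), le_top⟩
  have ram_inj : Function.Injective ram := by
    intro ρ σ h
    have h1 : topS ρ = topS σ := congrArg (fun r : RPn n => r.1.1) h
    apply Setoid.ext
    intro i j
    have := Setoid.ext_iff.mp h1 (Sum.inl i) (Sum.inl j)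
    exact this
  set z : A := ∑ ρ : Setoid (Fin n), c ρ • basis (ram ρ) with hz
  -- z is nonzero
  have hz0 : z ≠ 0 := by
    intro h
    obtain ⟨ρ₀, hρ₀⟩ : ∃ ρ, c ρ ≠ 0 := by
      by_contra hall; push_neg at hall; exact hc0 (funext hall)
    have hrepr : (basis.repr z) (ram ρ₀) = c ρ₀ := by
      rw [hz]
      rw [map_sum]
      rw [Finsupp.finset_sum_apply]
      rw [Finset.sum_eq_single ρ₀]
      · simp [Module.Basis.repr_self]
      · intro ρ _ hne
        simp only [map_smul, Module.Basis.repr_self, Finsupp.smul_single, smul_eq_mul, mul_one,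
          Finsupp.single_apply]
        rw [if_neg (fun hh => hne (ram_inj hh))]
      · intro hmem
        exact absurd (Finset.mem_univ ρ₀) hmem
    rw [h] at hrepr
    simp at hrepr
    exact hρ₀ hrepr.symm
  -- z (basis b) z = 0
  have hzbz : ∀ b : RPn n, z * basis b * z = 0 := by
    intro b
    set y₁ := b.1.1 with hy₁
    set y₂ := b.1.2 with hy₂
    set βv : Setoid (Fin n) := Setoid.comap Sum.inr y₁ with hβv
    have hstep1 : ∀ ρ : Setoid (Fin n), basis (ram ρ) * basis b
        = ((Q₁ : ℂ) ^ tval y₁ * (Q₂ : ℂ) ^ cnum (⊤ : PN n) y₂) •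
            basis ⟨(comp (topS ρ) y₁, comp ⊤ y₂), comp_mono le_top b.2⟩ := by
      intro ρ
      have h := hA.1 (ram ρ) b ⟨(comp (topS ρ) y₁, comp ⊤ y₂), comp_mono le_top b.2⟩ rfl
      dsimp only [ram] at h
      rwa [cnum_top] at h
    have hstep2 : ∀ ρ σ : Setoid (Fin n),
        basis ⟨(comp (topS ρ) y₁, comp ⊤ y₂), comp_mono le_top b.2⟩ * basis (ram σ)
        = ((Q₁ : ℂ) ^ (Nat.card (Quotient (βv ⊔ σ))) * (Q₂ : ℂ) ^ cnum (comp (⊤ : PN n) y₂) ⊤) •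
            basis ⟨(topS ρ, comp (comp ⊤ y₂) ⊤), topS_le_Omega ρ y₂⟩ := by
      intro ρ σ
      have hfirst : comp (comp (topS ρ) y₁) (topS σ) = topS ρ := by
        rw [comp_top]; exact comp_tb ρ βv σ
      have h := hA.1 ⟨(comp (topS ρ) y₁, comp ⊤ y₂), comp_mono le_top b.2⟩ (ram σ)
        ⟨(topS ρ, comp (comp ⊤ y₂) ⊤), topS_le_Omega ρ y₂⟩ (by
          dsimp only [ram]
          rw [hfirst])
      dsimp only [ram] at h
      rw [show cnum (comp (topS ρ) y₁) (topS σ) = Nat.card (Quotient (βv ⊔ σ)) by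
        rw [comp_top]; exact cnum_tb ρ βv σ] at h
      exact h
    have expand : z * basis b * z = ∑ ρ : Setoid (Fin n), ∑ σ : Setoid (Fin n),
        (c ρ * c σ) • (basis (ram ρ) * basis b * basis (ram σ)) := by
      rw [hz, Finset.sum_mul, Finset.sum_mul]
      refine Finset.sum_congr rfl (fun ρ _ => ?_)
      rw [smul_mul_assoc, smul_mul_assoc, Finset.mul_sum]
      rw [Finset.smul_sum]
      refine Finset.sum_congr rfl (fun σ _ => ?_)
      rw [mul_smul_comm, smul_smul]
    rw [expand]
    refine Finset.sum_eq_zero (fun ρ _ => ?_)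
    have hterm : ∀ σ : Setoid (Fin n), (c ρ * c σ) • (basis (ram ρ) * basis b * basis (ram σ))
        = (c ρ * ((Q₁ : ℂ) ^ tval y₁ * (Q₂ : ℂ) ^ cnum (⊤ : PN n) y₂ *
            (Q₂ : ℂ) ^ cnum (comp (⊤ : PN n) y₂) ⊤) *
            (c σ * (Q₁ : ℂ) ^ (Nat.card (Quotient (βv ⊔ σ))))) •
            basis ⟨(topS ρ, comp (comp ⊤ y₂) ⊤), topS_le_Omega ρ y₂⟩ := by
      intro σ
      rw [hstep1 ρ, smul_mul_assoc, hstep2 ρ σ, smul_smul, smul_smul]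
      congr 1
      ring
    rw [Finset.sum_congr rfl (fun σ _ => hterm σ), ← Finset.sum_smul]
    rw [show (∑ σ : Setoid (Fin n), c ρ * ((Q₁ : ℂ) ^ tval y₁ * (Q₂ : ℂ) ^ cnum (⊤ : PN n) y₂ *
            (Q₂ : ℂ) ^ cnum (comp (⊤ : PN n) y₂) ⊤) *
            (c σ * (Q₁ : ℂ) ^ (Nat.card (Quotient (βv ⊔ σ))))) = 0 by
      rw [← Finset.mul_sum]
      rw [key_sum Q₁ c hcf βv]
      rw [mul_zero]]
    rw [zero_smul]
  -- extend to all x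
  have hzxz : ∀ x : A, z * x * z = 0 := by
    have heq : (LinearMap.mulRight ℂ z).comp (LinearMap.mulLeft ℂ z) = 0 := by
      refine Module.Basis.ext basis (fun b => ?_)
      simp only [LinearMap.comp_apply, LinearMap.mulLeft_apply, LinearMap.mulRight_apply,
        LinearMap.zero_apply]
      exact hzbz b
    intro x
    have := LinearMap.congr_fun heq x
    simpa using this
  -- contradiction with semisimplicity
  haveI := hss
  obtain ⟨Cc, hC⟩ := exists_isCompl (Submodule.span A {z})
  have h1top : (1 : A) ∈ (Submodule.span A {z}) ⊔ Cc := by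
    rw [hC.sup_eq_top]; trivial
  obtain ⟨e, he, cc, hcc, hec⟩ := Submodule.mem_sup.mp h1top
  obtain ⟨a, ha⟩ := Submodule.mem_span_singleton.mp he
  have hze : z * e = 0 := by
    rw [← ha, smul_eq_mul, ← mul_assoc]
    exact hzxz a
  have hz1 : z = z * e + z * cc := by
    rw [← mul_add, hec, mul_one]
  have hzc : z ∈ Cc := by
    rw [hz1, hze, zero_add, ← smul_eq_mul]
    exact Cc.smul_mem z hcc
  have hmem : z ∈ (Submodule.span A {z}) ⊓ Cc :=
    ⟨Submodule.mem_span_singleton_self z, hzc⟩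
  rw [hC.inf_eq_bot] at hmem
  exact hz0 (by simpa using hmem)

end RamifiedPartition
end
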